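/- arXiv:2111.06724 — 6 statements merged into one kernel-verified Lean document; each statement's English description precedes it below -/
import Mathlib

section
/- With the notation for the Sierpiński triangle, the sets Δ^l, the triangle families τ_n^l, the level-approximations G_n^l(r), conductivities κ_n^l, and l,r-descendants as defined in the context: if f : Δ^l → ℝ is 1-Hölder-α, r ∉ f(𝐕), T is a triangle of G_n^l(r), and k ≥ 1, then the sum of κ_{n+k}^l(T') over all l,r-descendants T' ∈ τ_{n+k}^l of T is at least κ_n^l(T). -/
open scoped Classical

noncomputable section

/-- The plane `ℝ²` with the Euclidean metric. -/
abbrev E2 := EuclideanSpace ℝ (Fin 2)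

/-- The point `(x, y)` of the Euclidean plane. -/
def pt (x y : ℝ) : E2 := (WithLp.equiv 2 (Fin 2 → ℝ)).symm ![x, y]

/-- The three vertices of an equilateral triangle of side length 1. -/
def vtx : Fin 3 → E2 := ![pt 0 0, pt 1 0, pt (1 / 2) (Real.sqrt 3 / 2)]

/-- The homothety of ratio 1/2 centered at the `i`-th vertex. -/
def hmap (i : Fin 3) : E2 → E2 := fun x => AffineMap.homothety (vtx i) (1 / 2 : ℝ) x

/-- Composition of the homotheties along a word; words of length `n` index the
triangles of `τ_n`. -/
def compMap : List (Fin 3) → E2 → E2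
  | [], x => x
  | i :: ws, x => hmap i (compMap ws x)

/-- The initial closed equilateral triangle `Δ₀` of side length 1. -/
def Δ0 : Set E2 := convexHull ℝ (Set.range vtx)

/-- `𝐕`: the set of all vertices of all triangles of all families `τ_n`. -/
def Vset : Set E2 := {x | ∃ ws : List (Fin 3), ∃ i : Fin 3, compMap ws (vtx i) = x}

/-- A word `w ∈ {0,1,2}^l` indexes a triangle of `τ_l` lying on the boundary of `Δ₀`
iff it uses at most two distinct letters. -/
def Boundary {l : ℕ} (w : Fin l → Fin 3) : Prop := ∃ a b : Fin 3, ∀ i, w i = a ∨ w i = b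

/-- Boundary words of length `l`: the indices of the `3(2^l − 1)` similarities
defining `Δ^l`. -/
abbrev BWord (l : ℕ) := {w : Fin l → Fin 3 // Boundary w}

instance (l : ℕ) : Inhabited (BWord l) := ⟨⟨fun _ => 0, ⟨0, 0, fun _ => Or.inl rfl⟩⟩⟩

/-- The similarity of `Δ^l` indexed by a boundary word. -/
def bmap {l : ℕ} (w : BWord l) : E2 → E2 := compMap (List.ofFn w.1)

/-- The composite similarity indexed by an address, i.e. a list of boundary words;
addresses of length `n` index the triangles of `τ_n^l`. -/
def addrMap {l : ℕ} : List (BWord l) → E2 → E2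
  | [], x => x
  | w :: L, x => bmap w (addrMap L x)

/-- The `i`-th vertex of the triangle of `τ_n^l` with address `L` (`n = L.length`). -/
def triVtx {l : ℕ} (L : List (BWord l)) (i : Fin 3) : E2 := addrMap L (vtx i)

/-- The self-similar set `Δ^l ⊆ Δ`. -/
def SierpL (l : ℕ) : Set E2 :=
  ⋂ n : ℕ, ⋃ (L : List (BWord l)) (_ : L.length = n), addrMap L '' Δ0

/-- The triangle with address `L` belongs to `G_n^l(r)` iff `r` lies in the interior
of the convex hull of the values of `f` on its vertices, i.e. iff some vertex value
is `< r` and some vertex value is `> r`. -/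
def InG {l : ℕ} (f : E2 → ℝ) (r : ℝ) (L : List (BWord l)) : Prop :=
  (∃ i, f (triVtx L i) < r) ∧ (∃ j, r < f (triVtx L j))

/-- A selection of extreme vertices: for every triangle (address) `L`, `sel L` is a
pair of distinct vertex indices at which `f` attains its minimum resp. maximum on
the vertex set (with ties broken by the designation). -/
def ValidSel {l : ℕ} (f : E2 → ℝ) (sel : List (BWord l) → Fin 3 × Fin 3) : Prop :=
  ∀ L : List (BWord l), (sel L).1 ≠ (sel L).2 ∧
    (∀ i, f (triVtx L (sel L).1) ≤ f (triVtx L i)) ∧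
    (∀ i, f (triVtx L i) ≤ f (triVtx L (sel L).2))

/-- The child with address `L ++ [w]` is an extreme triangle of its parent `L` iff
it contains an extreme vertex of the parent. -/
def IsExtremeChild {l : ℕ} (sel : List (BWord l) → Fin 3 × Fin 3)
    (L : List (BWord l)) (w : BWord l) : Prop :=
  ∃ j : Fin 3, (j = (sel L).1 ∨ j = (sel L).2) ∧
    ∃ i : Fin 3, triVtx (L ++ [w]) i = triVtx L j

/-- The conductivity `κ_n^l` of the triangle with address `L`: it starts at `1` for
`Δ₀` and is halved at every step of the address at which the triangle is not an
extreme triangle of its parent. -/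
def kappa {l : ℕ} (sel : List (BWord l) → Fin 3 × Fin 3) (L : List (BWord l)) : ℝ :=
  (1 / 2 : ℝ) ^ ((Finset.range L.length).filter
    (fun m => ¬ IsExtremeChild sel (L.take m) (L.getI m))).card

/-
The inequality is proved one level at a time and then iterated over the levels. Let `T` be in
`G_n^l(r)` with extreme vertices `v₀, v₁`, so `f v₀ < r < f v₁`. If the corner child of `T` at
`v₀` or at `v₁` (its address is a constant word) lies in `G`, it is an extreme triangle and keeps
the whole conductivity of `T`. Otherwise consider the side `v₀v₁`: the boundary children of `T`
cut it into `2 ^ l` segments whose endpoints are in `𝐕`, hence not in `f⁻¹(r)`, so `f` jumps over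
`r` on one of them and that child is in `G`. The same argument on the side joining the third
vertex `v₂` to whichever of `v₀, v₁` lies on the other side of `r` gives a second child in `G`.
It is not the (excluded) corner child, so its word contains the letter of `v₂`, which the first
child's word does not; two distinct children of conductivity at least `κ(T) / 2` carry `κ(T)`.
-/

open AffineMap

section Halving

variable {V : Type*} [AddCommGroup V] [Module ℝ V]

lemma homothety_half_lineMap_left (p q : V) (t : ℝ) :
    homothety p (1 / 2 : ℝ) (lineMap p q t) = lineMap p q (t / 2) := by
  simp only [homothety_apply, lineMap_apply_module', vsub_eq_sub, vadd_eq_add]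
  module

lemma homothety_half_lineMap_right (p q : V) (t : ℝ) :
    homothety q (1 / 2 : ℝ) (lineMap p q t) = lineMap p q ((t + 1) / 2) := by
  simp only [homothety_apply, lineMap_apply_module', vsub_eq_sub, vadd_eq_add]
  module

end Halving

lemma exists_lt_and_lt_succ {α : Type*} [LinearOrder α] {F : ℕ → α} {r : α} {M : ℕ}
    (h0 : F 0 < r) (hM : r < F M) (hF : ∀ s < M, F s ≠ r) :
    ∃ s < M, F s < r ∧ r < F (s + 1) := by
  induction M with
  | zero => exact absurd h0 hM.not_gt
  | succ M ih =>
    rcases (hF M M.lt_succ_self).lt_or_gt with h | h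
    · exact ⟨M, M.lt_succ_self, h, hM⟩
    · obtain ⟨s, hs, hsr⟩ := ih h fun s hs => hF s (by omega)
      exact ⟨s, by omega, hsr⟩

lemma exists_apply_eq_of_ne_const {ι α : Type*} {w : ι → α} {a b : α}
    (hw : ∀ i, w i = a ∨ w i = b) (hne : w ≠ fun _ => b) : ∃ i, w i = a := by
  by_contra! h
  exact hne (funext fun i => (hw i).resolve_left (h i))

lemma List.forall_le_succ_take_cons_iff {α : Type*} {P : List α → Prop} {L : List α}
    (hL : P L) (w : α) (V : List α) (k : ℕ) :
    (∀ m ≤ k + 1, P (L ++ (w :: V).take m)) ↔ ∀ m ≤ k, P (L ++ [w] ++ V.take m) := by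
  have take_succ : ∀ m, L ++ (w :: V).take (m + 1) = L ++ [w] ++ V.take m := by simp
  refine ⟨fun h m hm => take_succ m ▸ h (m + 1) (by omega), fun h m hm => ?_⟩
  rcases m with _ | m
  · simpa using hL
  · exact (take_succ m).symm ▸ h m (by omega)

lemma compMap_append (u v : List (Fin 3)) (x : E2) :
    compMap (u ++ v) x = compMap u (compMap v x) := by
  induction u with
  | nil => rfl
  | cons a u ih => simp only [List.cons_append, compMap, ih]

lemma addrMap_append {l : ℕ} (L M : List (BWord l)) (x : E2) :
    addrMap (L ++ M) x = addrMap L (addrMap M x) := by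
  induction L with
  | nil => rfl
  | cons w L ih => simp only [List.cons_append, addrMap, ih]

lemma addrMap_eq_compMap_flatMap {l : ℕ} (L : List (BWord l)) (x : E2) :
    addrMap L x = compMap (L.flatMap fun w => List.ofFn w.1) x := by
  induction L with
  | nil => rfl
  | cons w L ih => simp only [addrMap, List.flatMap_cons, compMap_append, ih, bmap]

lemma triVtx_mem_Vset {l : ℕ} (L : List (BWord l)) (i : Fin 3) : triVtx L i ∈ Vset :=
  ⟨_, i, (addrMap_eq_compMap_flatMap L (vtx i)).symm⟩

lemma triVtx_append_singleton {l : ℕ} (L : List (BWord l)) (w : BWord l) (i : Fin 3) :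
    triVtx (L ++ [w]) i = addrMap L (compMap (List.ofFn w.1) (vtx i)) := by
  rw [triVtx, addrMap_append]
  rfl

/-- The letters of the `s`-th of the `2 ^ m` triangles of `τ_m` along the side of `Δ₀` from
`vtx a` to `vtx b`. -/
def sideWord (a b : Fin 3) : (m : ℕ) → ℕ → Fin m → Fin 3
  | 0, _ => Fin.elim0
  | m + 1, s =>
    if s < 2 ^ m then Fin.cons a (sideWord a b m s) else Fin.cons b (sideWord a b m (s - 2 ^ m))

lemma sideWord_eq_or_eq (a b : Fin 3) (m s : ℕ) (i : Fin m) :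
    sideWord a b m s i = a ∨ sideWord a b m s i = b := by
  induction m generalizing s with
  | zero => exact i.elim0
  | succ m ih =>
    rw [sideWord]
    split <;> refine Fin.cases ?_ (fun i => ?_) i <;> simp [ih]

lemma compMap_sideWord (a b : Fin 3) (m : ℕ) : ∀ s < 2 ^ m,
    compMap (List.ofFn (sideWord a b m s)) (vtx a) = lineMap (vtx a) (vtx b) ((s : ℝ) / 2 ^ m) ∧
    compMap (List.ofFn (sideWord a b m s)) (vtx b) =
      lineMap (vtx a) (vtx b) (((s : ℝ) + 1) / 2 ^ m) := by
  induction m with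
  | zero =>
    intro s hs
    obtain rfl : s = 0 := by simpa using hs
    simp [compMap]
  | succ m ih =>
    intro s hs
    by_cases h : s < 2 ^ m
    · obtain ⟨ha, hb⟩ := ih s h
      simp only [sideWord, if_pos h, List.ofFn_cons, compMap, hmap, ha, hb,
        homothety_half_lineMap_left]
      constructor <;> congr 1 <;> ring
    · have hs' : s - 2 ^ m < 2 ^ m := by rw [pow_succ] at hs; omega
      obtain ⟨ha, hb⟩ := ih (s - 2 ^ m) hs'
      simp only [sideWord, if_neg h, List.ofFn_cons, compMap, hmap, ha, hb,
        homothety_half_lineMap_right]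
      rw [Nat.cast_sub (not_lt.1 h)]
      push_cast
      constructor <;> congr 1 <;> field_simp <;> ring

def constWord (l : ℕ) (j : Fin 3) : BWord l := ⟨fun _ => j, j, j, fun _ => Or.inl rfl⟩

def sideBWord (a b : Fin 3) (l s : ℕ) : BWord l :=
  ⟨sideWord a b l s, a, b, sideWord_eq_or_eq a b l s⟩

lemma compMap_replicate_vtx (n : ℕ) (j : Fin 3) :
    compMap (List.replicate n j) (vtx j) = vtx j := by
  induction n with
  | zero => rfl
  | succ n ih => rw [List.replicate_succ, compMap, ih, hmap, homothety_apply_same]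

lemma triVtx_append_constWord {l : ℕ} (L : List (BWord l)) (j : Fin 3) :
    triVtx (L ++ [constWord l j]) j = triVtx L j := by
  rw [triVtx_append_singleton, constWord, List.ofFn_const, compMap_replicate_vtx]
  rfl

lemma triVtx_append_sideBWord {l : ℕ} (L : List (BWord l)) (a b : Fin 3) {s : ℕ}
    (hs : s < 2 ^ l) :
    triVtx (L ++ [sideBWord a b l s]) a = addrMap L (lineMap (vtx a) (vtx b) ((s : ℝ) / 2 ^ l)) ∧
    triVtx (L ++ [sideBWord a b l s]) b =
      addrMap L (lineMap (vtx a) (vtx b) (((s : ℝ) + 1) / 2 ^ l)) := by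
  simp only [triVtx_append_singleton, sideBWord, compMap_sideWord a b l s hs, and_self]

section Conductivity

variable {l : ℕ} (sel : List (BWord l) → Fin 3 × Fin 3)

lemma kappa_pos (L : List (BWord l)) : 0 < kappa sel L := by
  unfold kappa
  positivity

lemma kappa_append_singleton (L : List (BWord l)) (w : BWord l) :
    kappa sel (L ++ [w]) = if IsExtremeChild sel L w then kappa sel L else kappa sel L / 2 := by
  have prefix_eq : ∀ m ∈ Finset.range L.length,
      (if ¬IsExtremeChild sel ((L ++ [w]).take m) ((L ++ [w]).getI m) then 1 else 0) =
        if ¬IsExtremeChild sel (L.take m) (L.getI m) then 1 else 0 := by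
    intro m hm
    rw [Finset.mem_range] at hm
    rw [List.take_append_of_le_length hm.le, List.getI_append _ _ _ hm]
  rw [kappa, kappa, Finset.card_filter, Finset.card_filter, List.length_append,
    List.length_singleton, Finset.sum_range_succ, Finset.sum_congr rfl prefix_eq, List.take_left,
    List.getI_append_right _ _ _ le_rfl, Nat.sub_self, pow_add]
  by_cases hw : IsExtremeChild sel L w <;> simp [hw, div_eq_mul_inv]

lemma kappa_div_two_le_kappa_append (L : List (BWord l)) (w : BWord l) :
    kappa sel L / 2 ≤ kappa sel (L ++ [w]) := by
  rw [kappa_append_singleton]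
  split
  · linarith [kappa_pos sel L]
  · exact le_rfl

end Conductivity

section OneStep

variable {l : ℕ} {f : E2 → ℝ} {r : ℝ} {sel : List (BWord l) → Fin 3 × Fin 3}

lemma exists_inG_append_sideBWord (hr : r ∉ f '' Vset) (L : List (BWord l)) {a b : Fin 3}
    (ha : f (triVtx L a) < r) (hb : r < f (triVtx L b)) :
    ∃ s, InG f r (L ++ [sideBWord a b l s]) := by
  obtain ⟨s, hs, hlt, hgt⟩ := exists_lt_and_lt_succ
    (F := fun s : ℕ => f (addrMap L (lineMap (vtx a) (vtx b) ((s : ℝ) / 2 ^ l)))) (M := 2 ^ l)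
    (by simpa [triVtx] using ha) (by simpa [triVtx] using hb)
    fun s hs hFs => hr ⟨_, triVtx_mem_Vset (L ++ [sideBWord a b l s]) a,
      by rw [(triVtx_append_sideBWord L a b hs).1, hFs]⟩
  obtain ⟨hva, hvb⟩ := triVtx_append_sideBWord L a b hs
  push_cast at hgt
  exact ⟨s, ⟨a, hva ▸ hlt⟩, ⟨b, hvb ▸ hgt⟩⟩

lemma kappa_append_le_sum_children {L : List (BWord l)} {w : BWord l}
    (hw : InG f r (L ++ [w])) :
    kappa sel (L ++ [w]) ≤
      ∑ v : BWord l, if InG f r (L ++ [v]) then kappa sel (L ++ [v]) else 0 := by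
  have hle := Finset.single_le_sum
    (f := fun v => if InG f r (L ++ [v]) then kappa sel (L ++ [v]) else 0)
    (fun v _ => ite_nonneg (kappa_pos sel _).le le_rfl) (Finset.mem_univ w)
  rwa [if_pos hw] at hle

lemma kappa_le_sum_children_of_ne {L : List (BWord l)} {w₁ w₂ : BWord l} (hne : w₁ ≠ w₂)
    (h₁ : InG f r (L ++ [w₁])) (h₂ : InG f r (L ++ [w₂])) :
    kappa sel L ≤ ∑ v : BWord l, if InG f r (L ++ [v]) then kappa sel (L ++ [v]) else 0 := by
  calc kappa sel L = kappa sel L / 2 + kappa sel L / 2 := by ring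
    _ ≤ kappa sel (L ++ [w₁]) + kappa sel (L ++ [w₂]) :=
      add_le_add (kappa_div_two_le_kappa_append sel L w₁) (kappa_div_two_le_kappa_append sel L w₂)
    _ = ∑ v ∈ {w₁, w₂}, if InG f r (L ++ [v]) then kappa sel (L ++ [v]) else 0 := by
      rw [Finset.sum_pair hne, if_pos h₁, if_pos h₂]
    _ ≤ _ := Finset.sum_le_sum_of_subset_of_nonneg (Finset.subset_univ _)
      fun v _ _ => ite_nonneg (kappa_pos sel _).le le_rfl

lemma exists_inG_append_with_letter (hr : r ∉ f '' Vset) (L : List (BWord l))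
    {j₀ j₁ j₂ : Fin 3} (h₀ : f (triVtx L j₀) < r) (h₁ : r < f (triVtx L j₁))
    (hcorner₀ : ¬InG f r (L ++ [constWord l j₀])) (hcorner₁ : ¬InG f r (L ++ [constWord l j₁])) :
    ∃ w : BWord l, InG f r (L ++ [w]) ∧ ∃ i, w.1 i = j₂ := by
  have hv₂ : f (triVtx L j₂) ≠ r := fun h => hr ⟨_, triVtx_mem_Vset L j₂, h⟩
  rcases hv₂.lt_or_gt with h₂ | h₂
  · obtain ⟨s, hs⟩ := exists_inG_append_sideBWord hr L h₂ h₁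
    refine ⟨_, hs, exists_apply_eq_of_ne_const (sideWord_eq_or_eq j₂ j₁ l s) fun h => ?_⟩
    have hw : sideBWord j₂ j₁ l s = constWord l j₁ := Subtype.ext h
    exact hcorner₁ (hw ▸ hs)
  · obtain ⟨s, hs⟩ := exists_inG_append_sideBWord hr L h₀ h₂
    refine ⟨_, hs, exists_apply_eq_of_ne_const (fun i => (sideWord_eq_or_eq j₀ j₂ l s i).symm)
      fun h => ?_⟩
    have hw : sideBWord j₀ j₂ l s = constWord l j₀ := Subtype.ext h
    exact hcorner₀ (hw ▸ hs)

lemma kappa_le_sum_children (hr : r ∉ f '' Vset) (hsel : ValidSel f sel) {L : List (BWord l)}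
    (hL : InG f r L) :
    kappa sel L ≤ ∑ v : BWord l, if InG f r (L ++ [v]) then kappa sel (L ++ [v]) else 0 := by
  obtain ⟨hne, hmin, hmax⟩ := hsel L
  have h₀ : f (triVtx L (sel L).1) < r := hL.1.elim fun i hi => (hmin i).trans_lt hi
  have h₁ : r < f (triVtx L (sel L).2) := hL.2.elim fun i hi => hi.trans_le (hmax i)
  have extreme_corner (j : Fin 3) (hj : j = (sel L).1 ∨ j = (sel L).2)
      (hG : InG f r (L ++ [constWord l j])) :
      kappa sel L ≤ ∑ v : BWord l, if InG f r (L ++ [v]) then kappa sel (L ++ [v]) else 0 := by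
    have hext : IsExtremeChild sel L (constWord l j) := ⟨j, hj, j, triVtx_append_constWord L j⟩
    have hle := kappa_append_le_sum_children (sel := sel) hG
    rwa [kappa_append_singleton, if_pos hext] at hle
  by_cases hG₀ : InG f r (L ++ [constWord l (sel L).1])
  · exact extreme_corner _ (Or.inl rfl) hG₀
  by_cases hG₁ : InG f r (L ++ [constWord l (sel L).2])
  · exact extreme_corner _ (Or.inr rfl) hG₁
  obtain ⟨j₂, hj₂₀, hj₂₁⟩ : ∃ j₂ : Fin 3, j₂ ≠ (sel L).1 ∧ j₂ ≠ (sel L).2 := by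
    have third : ∀ a b : Fin 3, a ≠ b → ∃ c, c ≠ a ∧ c ≠ b := by decide
    exact third _ _ hne
  obtain ⟨s, hs⟩ := exists_inG_append_sideBWord hr L h₀ h₁
  obtain ⟨w, hw, i, hi⟩ := exists_inG_append_with_letter (j₂ := j₂) hr L h₀ h₁ hG₀ hG₁
  refine kappa_le_sum_children_of_ne (fun h => ?_) hs hw
  rcases sideWord_eq_or_eq (sel L).1 (sel L).2 l s i with h' | h'
  · exact hj₂₀ (hi ▸ h ▸ h')
  · exact hj₂₁ (hi ▸ h ▸ h')

end OneStep

theorem stmt2_general {l : ℕ}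
    (f : E2 → ℝ)
    (r : ℝ) (hr : r ∉ f '' Vset)
    (sel : List (BWord l) → Fin 3 × Fin 3) (hsel : ValidSel f sel)
    (L : List (BWord l)) (hL : InG f r L)
    (k : ℕ) :
    kappa sel L ≤
      ∑ W : Fin k → BWord l,
        (if ∀ m : ℕ, m ≤ k → InG f r (L ++ (List.ofFn W).take m)
         then kappa sel (L ++ List.ofFn W) else 0) := by
  induction k generalizing L with
  | zero => simp [hL]
  | succ k ih =>
    rw [← (Fin.consEquiv fun _ => BWord l).sum_comp, Fintype.sum_prod_type]
    refine (kappa_le_sum_children hr hsel hL).trans (Finset.sum_le_sum fun w _ => ?_)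
    simp only [Fin.consEquiv, Equiv.coe_fn_mk, List.ofFn_cons, List.forall_le_succ_take_cons_iff hL]
    split_ifs with hw
    · exact (ih (L ++ [w]) hw).trans_eq (Finset.sum_congr rfl fun W _ => by simp)
    · exact Finset.sum_nonneg fun W _ => ite_nonneg (kappa_pos sel _).le le_rfl

/-- **weak conservation of conductivity.** If `f : Δ^l → ℝ` is
1-Hölder-α, `r ∉ f(𝐕)`, the triangle with address `L` belongs to `G_n^l(r)`
(`n = L.length`) and `k ≥ 1`, then the sum of the conductivities of the
`l,r`-descendants of `L` in `τ_{n+k}^l` is at least the conductivity of `L`.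
Descendants at level `n + k` are indexed by the extensions `W : Fin k → BWord l`
whose intermediate addresses all stay in the sets `G_{n+m}^l(r)`. -/
theorem stmt2 {l : ℕ} (α : ℝ) (hα0 : 0 < α) (hα1 : α ≤ 1)
    (f : E2 → ℝ)
    (hf : ∀ x ∈ SierpL l, ∀ y ∈ SierpL l, |f x - f y| ≤ dist x y ^ α)
    (r : ℝ) (hr : r ∉ f '' Vset)
    (sel : List (BWord l) → Fin 3 × Fin 3) (hsel : ValidSel f sel)
    (L : List (BWord l)) (hL : InG f r L)
    (k : ℕ) (hk : 1 ≤ k) :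
    kappa sel L ≤
      ∑ W : Fin k → BWord l,
        (if ∀ m : ℕ, m ≤ k → InG f r (L ++ (List.ofFn W).take m)
         then kappa sel (L ++ List.ofFn W) else 0) :=
  stmt2_general f r hr sel hsel L hL k
end
end

section
/- Let 1/2 < p < 1 and let λ_p be the Borel probability measure on [0,1) determined by λ_p([Σ_{k=1}^n e_k 2^{−k}, Σ_{k=1}^n e_k 2^{−k} + 2^{−n})) = p^{Σ_{k=1}^n e_k} (1−p)^{Σ_{k=1}^n (1−e_k)} for all n ∈ ℕ and all digits e_k ∈ {0,1}. Define f(x) = λ_p([0, x)) for x ∈ [0,1]. Then for all x, y ∈ [0,1], |f(x) − f(y)| ≤ 3|x − y|^{α}, where α = −log₂ p; that is, the distribution function of λ_p is 3-Hölder with exponent −log₂ p. -/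
/-!
Since `1 - p ≤ p`, every dyadic interval of generation `n` in `[0, 1)` has mass at most
`p ^ n = (2⁻ⁿ) ^ α` with `α = -log₂ p`. An interval `[a, b) ⊆ [0, 1)` with
`2⁻ⁿ⁻¹ < b - a ≤ 2⁻ⁿ` is covered by three dyadic intervals of generation `n + 1`, so
`f b - f a = λ_p [a, b) ≤ 3 p ^ (n + 1) ≤ 3 (b - a) ^ α`.
-/

open MeasureTheory Set
open scoped ENNReal

def IsBinomialMeasure (p : ℝ) (μ : Measure ℝ) : Prop :=
  ∀ n : ℕ, ∀ e : Fin n → Fin 2,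
    μ (Ico (∑ k : Fin n, ((e k : ℕ) : ℝ) * ((2 : ℝ) ^ ((k : ℕ) + 1))⁻¹)
        ((∑ k : Fin n, ((e k : ℕ) : ℝ) * ((2 : ℝ) ^ ((k : ℕ) + 1))⁻¹) + ((2 : ℝ) ^ n)⁻¹))
      = ENNReal.ofReal (p ^ (∑ k : Fin n, (e k : ℕ)) * (1 - p) ^ (n - ∑ k : Fin n, (e k : ℕ)))

theorem exists_binary_digits (n m : ℕ) (hm : m < 2 ^ n) :
    ∃ e : Fin n → Fin 2,
      ∑ k : Fin n, ((e k : ℕ) : ℝ) * ((2 : ℝ) ^ ((k : ℕ) + 1))⁻¹ = m * ((2 : ℝ) ^ n)⁻¹ := by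
  induction n generalizing m with
  | zero => exact ⟨Fin.elim0, by simp_all⟩
  | succ n ih =>
    obtain ⟨e, he⟩ := ih (m / 2) (by omega)
    refine ⟨Fin.snoc e ⟨m % 2, by omega⟩, ?_⟩
    have hm : (m : ℝ) = 2 * (m / 2 : ℕ) + (m % 2 : ℕ) := by
      exact_mod_cast (Nat.div_add_mod m 2).symm
    simp only [Fin.sum_univ_castSucc, Fin.snoc_castSucc, Fin.snoc_last, Fin.val_last,
      Fin.val_castSucc, he, hm]
    field_simp
    ring

theorem measure_Ico_le_three_mul {ν : Measure ℝ} {δ : ℝ} {c : ℝ≥0∞} (hδ : 0 < δ)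
    (h : ∀ m : ℤ, ν (Ico (m * δ) ((m + 1) * δ)) ≤ c) {a b : ℝ} (hab : b - a ≤ 2 * δ) :
    ν (Ico a b) ≤ 3 * c := by
  have hcover : Ico a b ⊆ ⋃ m ∈ Finset.Ico ⌊a / δ⌋ (⌊a / δ⌋ + 3), Ico (m * δ) ((m + 1) * δ) := by
    intro z ⟨haz, hzb⟩
    have hz : z / δ < ⌊a / δ⌋ + 3 :=
      calc z / δ = a / δ + (z - a) / δ := by ring
        _ < a / δ + 2 := by gcongr; rw [div_lt_iff₀ hδ]; linarith
        _ < ⌊a / δ⌋ + 3 := by linarith [Int.lt_floor_add_one (a / δ)]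
    refine mem_biUnion (x := ⌊z / δ⌋) (Finset.mem_Ico.mpr ⟨?_, ?_⟩) ⟨?_, ?_⟩
    · exact Int.floor_mono (by gcongr)
    · exact Int.floor_lt.mpr (by exact_mod_cast hz)
    · exact (le_div_iff₀ hδ).mp (Int.floor_le _)
    · exact (div_lt_iff₀ hδ).mp (Int.lt_floor_add_one _)
  calc ν (Ico a b) ≤ ∑ m ∈ Finset.Ico ⌊a / δ⌋ (⌊a / δ⌋ + 3), ν (Ico (m * δ) ((m + 1) * δ)) :=
        (measure_mono hcover).trans (measure_biUnion_finset_le _ _)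
    _ ≤ ∑ m ∈ Finset.Ico ⌊a / δ⌋ (⌊a / δ⌋ + 3), c := Finset.sum_le_sum fun m _ => h m
    _ = 3 * c := by simp [Int.card_Ico]

theorem pow_eq_inv_two_pow_rpow {p : ℝ} (hp : 0 < p) (n : ℕ) :
    p ^ n = (((2 : ℝ) ^ n)⁻¹) ^ (-(Real.log p / Real.log 2)) := by
  rw [← inv_pow, ← Real.rpow_pow_comm (by norm_num), Real.inv_rpow zero_le_two,
    Real.rpow_neg zero_le_two, inv_inv, Real.log_div_log, Real.rpow_logb two_pos (by norm_num) hp]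

namespace IsBinomialMeasure

variable {p : ℝ} {μ : Measure ℝ}

theorem measure_Ico_zero_one (hμ : IsBinomialMeasure p μ) : μ (Ico 0 1) = 1 := by
  simpa using hμ 0 Fin.elim0

theorem measure_dyadic_le (hμ : IsBinomialMeasure p μ) (hp : 1 / 2 ≤ p) (hp1 : p ≤ 1)
    {n m : ℕ} (hm : m < 2 ^ n) :
    μ (Ico (m * ((2 : ℝ) ^ n)⁻¹) ((m + 1) * ((2 : ℝ) ^ n)⁻¹)) ≤ ENNReal.ofReal (p ^ n) := by
  obtain ⟨e, he⟩ := exists_binary_digits n m hm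
  have hones : ∑ k : Fin n, (e k : ℕ) ≤ n :=
    (Finset.sum_le_sum fun k _ => Nat.lt_succ_iff.mp (e k).isLt).trans (by simp)
  rw [add_one_mul, ← he, hμ n e]
  refine ENNReal.ofReal_le_ofReal ?_
  calc p ^ (∑ k, (e k : ℕ)) * (1 - p) ^ (n - ∑ k, (e k : ℕ))
      ≤ p ^ (∑ k, (e k : ℕ)) * p ^ (n - ∑ k, (e k : ℕ)) := by
        gcongr
        linarith
    _ = p ^ n := by rw [← pow_add, Nat.add_sub_cancel' hones]

/-- `μ` is unconstrained off `[0, 1)`; restricting to `[0, 1)` gives the bound for every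
integer cell, as `measure_Ico_le_three_mul` requires. -/
theorem restrict_measure_dyadic_le (hμ : IsBinomialMeasure p μ) (hp : 1 / 2 ≤ p) (hp1 : p ≤ 1)
    (n : ℕ) (m : ℤ) :
    μ.restrict (Ico 0 1) (Ico (m * ((2 : ℝ) ^ n)⁻¹) ((m + 1) * ((2 : ℝ) ^ n)⁻¹))
      ≤ ENNReal.ofReal (p ^ n) := by
  rw [Measure.restrict_apply measurableSet_Ico]
  by_cases hm : 0 ≤ m ∧ m < 2 ^ n
  · lift m to ℕ using hm.1
    exact (measure_mono inter_subset_left).trans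
      (hμ.measure_dyadic_le hp hp1 (by exact_mod_cast hm.2))
  · suffices Ico (m * ((2 : ℝ) ^ n)⁻¹) ((m + 1) * ((2 : ℝ) ^ n)⁻¹) ∩ Ico 0 1 = ∅ by simp [this]
    refine eq_empty_of_forall_notMem fun z ⟨⟨hmz, hzm⟩, hz0, hz1⟩ => ?_
    have hpos : (0 : ℝ) < ((2 : ℝ) ^ n)⁻¹ := by positivity
    rcases not_and_or.mp hm with hm | hm
    · have : (m : ℝ) + 1 ≤ 0 := by exact_mod_cast (not_le.mp hm : m + 1 ≤ 0)
      nlinarith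
    · have : (2 : ℝ) ^ n ≤ m := by exact_mod_cast not_lt.mp hm
      have : 1 ≤ m * ((2 : ℝ) ^ n)⁻¹ := by rwa [← div_eq_mul_inv, one_le_div (by positivity)]
      linarith

theorem measure_Ico_le (hμ : IsBinomialMeasure p μ) (hp : 1 / 2 ≤ p) (hp1 : p ≤ 1)
    {a b : ℝ} (ha : 0 ≤ a) (hab : a ≤ b) (hb : b ≤ 1) :
    (μ (Ico a b)).toReal ≤ 3 * (b - a) ^ (-(Real.log p / Real.log 2)) := by
  rcases hab.eq_or_lt with rfl | hab
  · simp only [Ico_self, measure_empty, ENNReal.toReal_zero]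
    positivity
  obtain ⟨n, hlt, hle⟩ :=
    exists_nat_pow_near_of_lt_one (sub_pos.mpr hab) (by linarith) (by norm_num : (0 : ℝ) < 2⁻¹)
      (by norm_num)
  have hα : 0 ≤ -(Real.log p / Real.log 2) := by
    rw [Real.log_div_log, neg_nonneg]
    exact Real.logb_nonpos one_lt_two (by linarith) hp1
  have hmeas : μ (Ico a b) ≤ 3 * ENNReal.ofReal (p ^ (n + 1)) := by
    rw [← Measure.restrict_eq_self μ (Ico_subset_Ico ha hb)]
    refine measure_Ico_le_three_mul (by positivity)
      (hμ.restrict_measure_dyadic_le hp hp1 (n + 1)) ?_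
    rw [← inv_pow, pow_succ]
    linarith
  calc (μ (Ico a b)).toReal ≤ 3 * p ^ (n + 1) := by
        refine ENNReal.toReal_le_of_le_ofReal (by positivity) ?_
        rwa [ENNReal.ofReal_mul zero_le_three, ENNReal.ofReal_ofNat]
    _ ≤ 3 * (b - a) ^ (-(Real.log p / Real.log 2)) := by
        rw [pow_eq_inv_two_pow_rpow (by linarith), ← inv_pow]
        gcongr

theorem toReal_measure_Ico_zero_sub (hμ : IsBinomialMeasure p μ)
    {a b : ℝ} (ha : 0 ≤ a) (hab : a ≤ b) (hb : b ≤ 1) :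
    (μ (Ico 0 b)).toReal - (μ (Ico 0 a)).toReal = (μ (Ico a b)).toReal := by
  have hfin : ∀ {s}, s ⊆ Ico (0 : ℝ) 1 → μ s ≠ ⊤ := fun hs =>
    ne_top_of_le_ne_top (by simp [hμ.measure_Ico_zero_one]) (measure_mono hs)
  simp only [← measureReal_def]
  rw [← Ico_union_Ico_eq_Ico ha hab, measureReal_union Ico_disjoint_Ico_same measurableSet_Ico
    (hfin (Ico_subset_Ico le_rfl (hab.trans hb))) (hfin (Ico_subset_Ico ha hb))]
  ring

end IsBinomialMeasure

/-- Let `1/2 < p < 1` and let `λ_p` be a Borel measure on `ℝ`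
assigning to each binary cylinder interval of generation `n` (determined by digits
`e₁, …, e_n ∈ {0,1}`) the mass `p^{Σ e_k} (1−p)^{Σ (1−e_k)}`. Then the distribution
function `f(x) = λ_p([0, x))` satisfies `|f x − f y| ≤ 3 |x − y| ^ (−log₂ p)` for
all `x, y ∈ [0, 1]`; that is, `f` is `3`-Hölder with exponent `−log₂ p`. -/
theorem stmt6 (p : ℝ) (hp1 : 1 / 2 < p) (hp2 : p < 1)
    (μ : Measure ℝ)
    (hμ : ∀ n : ℕ, ∀ e : Fin n → Fin 2,
      μ (Set.Ico (∑ k : Fin n, ((e k : ℕ) : ℝ) * ((2 : ℝ) ^ ((k : ℕ) + 1))⁻¹)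
          ((∑ k : Fin n, ((e k : ℕ) : ℝ) * ((2 : ℝ) ^ ((k : ℕ) + 1))⁻¹) + ((2 : ℝ) ^ n)⁻¹))
        = ENNReal.ofReal
            (p ^ (∑ k : Fin n, (e k : ℕ)) * (1 - p) ^ (n - ∑ k : Fin n, (e k : ℕ))))
    (f : ℝ → ℝ) (hf : ∀ x, f x = (μ (Set.Ico 0 x)).toReal) :
    ∀ x ∈ Set.Icc (0 : ℝ) 1, ∀ y ∈ Set.Icc (0 : ℝ) 1,
      |f x - f y| ≤ 3 * |x - y| ^ (-(Real.log p / Real.log 2)) := by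
  have hμ : IsBinomialMeasure p μ := hμ
  have holder : ∀ x ∈ Icc (0 : ℝ) 1, ∀ y ∈ Icc (0 : ℝ) 1, x ≤ y →
      |f x - f y| ≤ 3 * |x - y| ^ (-(Real.log p / Real.log 2)) := by
    intro x ⟨hx, _⟩ y ⟨_, hy⟩ hxy
    rw [abs_sub_comm, abs_sub_comm x, abs_of_nonneg (sub_nonneg.mpr hxy), hf, hf,
      hμ.toReal_measure_Ico_zero_sub hx hxy hy, abs_of_nonneg ENNReal.toReal_nonneg]
    exact hμ.measure_Ico_le hp1.le hp2.le hx hxy hy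
  intro x hx y hy
  rcases le_total x y with hxy | hyx
  · exact holder x hx y hy hxy
  · rw [abs_sub_comm, abs_sub_comm x]
    exact holder y hy x hx hyx
end

section
/- Let f₁, …, f_m : ℝ^p → ℝ^p be an iterated function system satisfying the strong separation condition, i.e. its attractor F (the unique nonempty compact set with F = ⋃_{i=1}^m f_i(F)) satisfies that the sets f₁(F), …, f_m(F) are pairwise disjoint. Assume each f_i is bi-Lipschitz: there exist 0 < ν_i, ρ_i < 1 with ν_i|x − y| ≤ |f_i(x) − f_i(y)| ≤ ρ_i|x − y| for all x, y. Then F admits a (ν, ρ) separated structure for some 0 < ν, ρ < 1. -/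
/-! With `r = max ρᵢ` and `s = min νᵢ`, the level-`k` cylinders `f_{w₁} ∘ ⋯ ∘ f_{wₖ} (F)`
cover `F`, have diameter at most `diam F · rᵏ`, and two distinct ones are at distance at least
`δ · sᵏ`, where `δ > 0` separates the first-level pieces `fᵢ(F)`: strip the common prefix of
the two words (each letter scales distances by a factor at least `s`), and the first differing
letters put the points in two distinct first-level pieces. Hence `F` has an `(r, s)` separated
structure. -/

noncomputable section

/-- A nonempty set `F ⊆ ℝ^p` admits a `(ν, ρ)` separated structure: there are
`K > 0` and, for every `k`, a finite family `𝒮_k` of sets covering `F`, each of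
diameter `< K ν^k`, with distinct members at (inf) distance `> (1/K) ρ^k`. -/
def SepStructure {p : ℕ} (ν ρ : ℝ) (F : Set (EuclideanSpace ℝ (Fin p))) : Prop :=
  ∃ K : ℝ, 0 < K ∧ ∀ k : ℕ, ∃ S : Finset (Set (EuclideanSpace ℝ (Fin p))),
    (F ⊆ ⋃ A ∈ S, A) ∧
    (∀ A ∈ S, EMetric.diam A < ENNReal.ofReal (K * ν ^ k)) ∧
    (∀ A ∈ S, ∀ B ∈ S, A ≠ B →
      ENNReal.ofReal ((1 / K) * ρ ^ k) < ⨅ x ∈ A, EMetric.infEdist x B)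

open Filter Function Topology

section Cylinders

variable {X ι : Type*} [Fintype ι]

open Classical in
def cylinders (f : ι → X → X) (F : Set X) : ℕ → Finset (Set X)
  | 0 => {F}
  | k + 1 => (Finset.univ ×ˢ cylinders f F k).image fun z => f z.1 '' z.2

variable {f : ι → X → X} {F : Set X}

@[simp]
lemma mem_cylinders_zero {A : Set X} : A ∈ cylinders f F 0 ↔ A = F :=
  Finset.mem_singleton

lemma mem_cylinders_succ {k : ℕ} {A : Set X} :
    A ∈ cylinders f F (k + 1) ↔ ∃ i, ∃ B ∈ cylinders f F k, A = f i '' B := by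
  classical
  simp only [cylinders, Finset.mem_image, Finset.mem_product, Finset.mem_univ, true_and,
    Prod.exists, eq_comm]

lemma subset_of_mem_cylinders (hF : ∀ i, f i '' F ⊆ F) :
    ∀ {k : ℕ} {A : Set X}, A ∈ cylinders f F k → A ⊆ F
  | 0, A, hA => (mem_cylinders_zero.1 hA).le
  | k + 1, A, hA => by
    obtain ⟨i, B, hB, rfl⟩ := mem_cylinders_succ.1 hA
    exact (Set.image_mono (subset_of_mem_cylinders hF hB)).trans (hF i)

lemma subset_biUnion_cylinders (hF : F ⊆ ⋃ i, f i '' F) :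
    ∀ k : ℕ, F ⊆ ⋃ A ∈ cylinders f F k, A
  | 0 => by simp
  | k + 1 => by
    intro x hx
    obtain ⟨i, a, ha, rfl⟩ : ∃ i, ∃ a ∈ F, f i a = x := by simpa using hF hx
    obtain ⟨B, hB, haB⟩ : ∃ B ∈ cylinders f F k, a ∈ B := by
      simpa using subset_biUnion_cylinders hF k ha
    exact Set.mem_biUnion (mem_cylinders_succ.2 ⟨i, B, hB, rfl⟩) (Set.mem_image_of_mem _ haB)

variable [PseudoMetricSpace X]

lemma dist_le_of_mem_cylinders {r D : ℝ} (hr : 0 ≤ r)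
    (hf : ∀ i x y, dist (f i x) (f i y) ≤ r * dist x y)
    (hD : ∀ x ∈ F, ∀ y ∈ F, dist x y ≤ D) :
    ∀ {k : ℕ} {A : Set X}, A ∈ cylinders f F k →
      ∀ x ∈ A, ∀ y ∈ A, dist x y ≤ D * r ^ k
  | 0, A, hA => by
    rw [mem_cylinders_zero.1 hA]
    intro x hx y hy
    simpa using hD x hx y hy
  | k + 1, A, hA => by
    obtain ⟨i, B, hB, rfl⟩ := mem_cylinders_succ.1 hA
    rintro _ ⟨a, ha, rfl⟩ _ ⟨b, hb, rfl⟩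
    calc dist (f i a) (f i b) ≤ r * dist a b := hf i a b
      _ ≤ r * (D * r ^ k) := by gcongr; exact dist_le_of_mem_cylinders hr hf hD hB a ha b hb
      _ = D * r ^ (k + 1) := by ring

lemma le_dist_of_mem_cylinders {s δ : ℝ} (hs₀ : 0 ≤ s) (hs₁ : s ≤ 1) (hδ : 0 ≤ δ)
    (hf : ∀ i x y, s * dist x y ≤ dist (f i x) (f i y)) (hF : ∀ i, f i '' F ⊆ F)
    (hsep : ∀ i j, i ≠ j → ∀ x ∈ f i '' F, ∀ y ∈ f j '' F, δ ≤ dist x y) :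
    ∀ {k : ℕ} {A B : Set X}, A ∈ cylinders f F k → B ∈ cylinders f F k → A ≠ B →
      ∀ x ∈ A, ∀ y ∈ B, δ * s ^ k ≤ dist x y
  | 0, A, B, hA, hB, hAB =>
    (hAB ((mem_cylinders_zero.1 hA).trans (mem_cylinders_zero.1 hB).symm)).elim
  | k + 1, A, B, hA, hB, hAB => by
    obtain ⟨i, A', hA', rfl⟩ := mem_cylinders_succ.1 hA
    obtain ⟨j, B', hB', rfl⟩ := mem_cylinders_succ.1 hB
    rintro _ ⟨a, ha, rfl⟩ _ ⟨b, hb, rfl⟩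
    obtain rfl | hij := eq_or_ne i j
    · have hA'B' : A' ≠ B' := by rintro rfl; exact hAB rfl
      calc δ * s ^ (k + 1) = s * (δ * s ^ k) := by ring
        _ ≤ s * dist a b := by
          gcongr; exact le_dist_of_mem_cylinders hs₀ hs₁ hδ hf hF hsep hA' hB' hA'B' a ha b hb
        _ ≤ dist (f i a) (f i b) := hf i a b
    · calc δ * s ^ (k + 1) ≤ δ := mul_le_of_le_one_right hδ (pow_le_one₀ hs₀ hs₁)
        _ ≤ dist (f i a) (f j b) :=
          hsep i j hij _ (Set.mem_image_of_mem _ (subset_of_mem_cylinders hF hA' ha))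
            _ (Set.mem_image_of_mem _ (subset_of_mem_cylinders hF hB' hb))

end Cylinders

lemma exists_pos_le_dist_of_pairwise_disjoint {X ι : Type*} [MetricSpace X] [Finite ι]
    {A : ι → Set X} (hA : ∀ i, IsCompact (A i)) (hd : Pairwise (Disjoint on A)) :
    ∃ δ : ℝ, 0 < δ ∧
      ∀ i j, i ≠ j → ∀ x ∈ A i, ∀ y ∈ A j, δ ≤ dist x y := by
  have hpair : ∀ i j, ∀ᶠ δ in 𝓝 (0 : ℝ),
      i ≠ j → ∀ x ∈ A i, ∀ y ∈ A j, δ ≤ dist x y := by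
    intro i j
    by_cases hij : i = j
    · exact Eventually.of_forall fun _ h => (h hij).elim
    obtain ⟨c, hc, hcA⟩ := Metric.exists_pos_forall_lt_edist (hA i) (hA j).isClosed (hd hij)
    filter_upwards [gt_mem_nhds (NNReal.coe_pos.2 hc)] with δ hδ _ x hx y hy
    have hxy := hcA x hx y hy
    rw [edist_nndist, ENNReal.coe_lt_coe] at hxy
    exact hδ.le.trans (NNReal.coe_lt_coe.2 hxy).le
  simp only [← eventually_all] at hpair
  have hpos : ∀ᶠ δ in 𝓝[Set.Ioi 0] (0 : ℝ), δ ∈ Set.Ioi 0 := eventually_mem_nhdsWithin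
  exact (hpos.and (hpair.filter_mono nhdsWithin_le_nhds)).exists

lemma sepStructure_of_dist_le {p : ℕ} {ν ρ D δ : ℝ}
    (hν : 0 < ν) (hρ : 0 < ρ) (hδ : 0 < δ)
    {F : Set (EuclideanSpace ℝ (Fin p))} (S : ℕ → Finset (Set (EuclideanSpace ℝ (Fin p))))
    (hcover : ∀ k, F ⊆ ⋃ A ∈ S k, A)
    (hdiam : ∀ k, ∀ A ∈ S k, ∀ x ∈ A, ∀ y ∈ A, dist x y ≤ D * ν ^ k)
    (hsep : ∀ k, ∀ A ∈ S k, ∀ B ∈ S k, A ≠ B →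
      ∀ x ∈ A, ∀ y ∈ B, δ * ρ ^ k ≤ dist x y) :
    SepStructure ν ρ F := by
  set K := max (D + 1) (2 / δ)
  have hDK : D < K := (lt_add_one D).trans_le (le_max_left _ _)
  have hK : 0 < K := (div_pos two_pos hδ).trans_le (le_max_right _ _)
  have hKδ : 1 / K < δ := by
    calc 1 / K ≤ 1 / (2 / δ) := one_div_le_one_div_of_le (by positivity) (le_max_right _ _)
      _ = δ / 2 := one_div_div 2 δ
      _ < δ := half_lt_self hδ
  refine ⟨K, hK, fun k => ⟨S k, hcover k, fun A hA => ?_, fun A hA B hB hAB => ?_⟩⟩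
  · calc Metric.ediam A ≤ ENNReal.ofReal (D * ν ^ k) := Metric.ediam_le fun x hx y hy => by
          rw [edist_dist]; exact ENNReal.ofReal_le_ofReal (hdiam k A hA x hx y hy)
      _ < ENNReal.ofReal (K * ν ^ k) :=
          (ENNReal.ofReal_lt_ofReal_iff (by positivity)).2 (by gcongr)
  · calc ENNReal.ofReal (1 / K * ρ ^ k) < ENNReal.ofReal (δ * ρ ^ k) :=
          (ENNReal.ofReal_lt_ofReal_iff (by positivity)).2 (by gcongr)
      _ ≤ ⨅ x ∈ A, Metric.infEDist x B :=
          le_iInf₂ fun x hx => Metric.le_infEDist.2 fun y hy => by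
          rw [edist_dist]; exact ENNReal.ofReal_le_ofReal (hsep k A hA B hB hAB x hx y hy)

theorem stmt7_general {p : ℕ} (m : ℕ) (hm : 0 < m)
    (f : Fin m → EuclideanSpace ℝ (Fin p) → EuclideanSpace ℝ (Fin p))
    (ν ρ : Fin m → ℝ)
    (hν : ∀ i, 0 < ν i ∧ ν i < 1) (hρ : ∀ i, 0 < ρ i ∧ ρ i < 1)
    (hbl : ∀ i, ∀ x y, ν i * dist x y ≤ dist (f i x) (f i y) ∧
      dist (f i x) (f i y) ≤ ρ i * dist x y)
    (F : Set (EuclideanSpace ℝ (Fin p))) (hFc : IsCompact F)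
    (hinv : F = ⋃ i, f i '' F)
    (hssc : ∀ i j, i ≠ j → Disjoint (f i '' F) (f j '' F)) :
    ∃ ν' ρ' : ℝ, 0 < ν' ∧ ν' < 1 ∧ 0 < ρ' ∧ ρ' < 1 ∧ SepStructure ν' ρ' F := by
  have : Nonempty (Fin m) := Fin.pos_iff_nonempty.1 hm
  obtain ⟨i₀, hρmax⟩ := Finite.exists_max ρ
  obtain ⟨j₀, hνmin⟩ := Finite.exists_min ν
  have hcont : ∀ i, Continuous (f i) := fun i =>
    (LipschitzWith.of_dist_le' (hbl i · · |>.2)).continuous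
  have hsub : ∀ i, f i '' F ⊆ F := fun i =>
    (Set.subset_iUnion (fun i => f i '' F) i).trans hinv.ge
  obtain ⟨δ, hδ, hsep⟩ :=
    exists_pos_le_dist_of_pairwise_disjoint (fun i => hFc.image (hcont i)) (fun i j => hssc i j)
  have hupper : ∀ i x y, dist (f i x) (f i y) ≤ ρ i₀ * dist x y := fun i x y =>
    (hbl i x y).2.trans (by gcongr; exact hρmax i)
  have hlower : ∀ i x y, ν j₀ * dist x y ≤ dist (f i x) (f i y) := fun i x y =>
    (mul_le_mul_of_nonneg_right (hνmin i) dist_nonneg).trans (hbl i x y).1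
  have hdiamF : ∀ x ∈ F, ∀ y ∈ F, dist x y ≤ Metric.diam F := fun x hx y hy =>
    Metric.dist_le_diam_of_mem hFc.isBounded hx hy
  refine ⟨ρ i₀, ν j₀, (hρ i₀).1, (hρ i₀).2, (hν j₀).1, (hν j₀).2, ?_⟩
  exact sepStructure_of_dist_le (hρ i₀).1 (hν j₀).1 hδ (cylinders f F)
    (subset_biUnion_cylinders hinv.le)
    (fun k A hA => dist_le_of_mem_cylinders (hρ i₀).1.le hupper hdiamF hA)
    (fun k A hA B hB =>
      le_dist_of_mem_cylinders (hν j₀).1.le (hν j₀).2.le hδ.le hlower hsub hsep hA hB)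

/-- If `f₁, …, f_m` is a bi-Lipschitz iterated function system on
`ℝ^p` satisfying the strong separation condition (the images of the attractor `F`
are pairwise disjoint), then `F` admits a `(ν, ρ)` separated structure for some
`0 < ν, ρ < 1`. -/
theorem stmt7 {p : ℕ} (m : ℕ) (hm : 0 < m)
    (f : Fin m → EuclideanSpace ℝ (Fin p) → EuclideanSpace ℝ (Fin p))
    (ν ρ : Fin m → ℝ)
    (hν : ∀ i, 0 < ν i ∧ ν i < 1) (hρ : ∀ i, 0 < ρ i ∧ ρ i < 1)
    (hbl : ∀ i, ∀ x y, ν i * dist x y ≤ dist (f i x) (f i y) ∧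
      dist (f i x) (f i y) ≤ ρ i * dist x y)
    (F : Set (EuclideanSpace ℝ (Fin p))) (hFne : F.Nonempty) (hFc : IsCompact F)
    (hinv : F = ⋃ i, f i '' F)
    (hssc : ∀ i j, i ≠ j → Disjoint (f i '' F) (f j '' F)) :
    ∃ ν' ρ' : ℝ, 0 < ν' ∧ ν' < 1 ∧ 0 < ρ' ∧ ρ' < 1 ∧ SepStructure ν' ρ' F :=
  stmt7_general m hm f ν ρ hν hρ hbl F hFc hinv hssc

end
end

section
/- Let f₁, …, f_m : ℝ^p → ℝ^p be contracting similarities (|f_i(x) − f_i(y)| = r_i|x − y| with 0 < r_i < 1) whose attractor F (the unique nonempty compact set with F = ⋃_{i=1}^m f_i(F)) satisfies the strong separation condition, i.e. the sets f₁(F), …, f_m(F) are pairwise disjoint. Then F admits a (ν, ν) separated structure for some 0 < ν < 1. -/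
noncomputable section

namespace Stmt8Aux

variable {p m : ℕ}

/-- Composition of the maps along a word. -/
def gw (f : Fin m → EuclideanSpace ℝ (Fin p) → EuclideanSpace ℝ (Fin p)) :
    List (Fin m) → EuclideanSpace ℝ (Fin p) → EuclideanSpace ℝ (Fin p)
  | [] => id
  | i :: w => f i ∘ gw f w

/-- Product of contraction ratios along a word. -/
def rr (r : Fin m → ℝ) (w : List (Fin m)) : ℝ := (w.map r).prod

/-- Longest common prefix. -/
def lcp : List (Fin m) → List (Fin m) → List (Fin m)
  | a :: s, b :: t => if a = b then a :: lcp s t else []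
  | _, _ => []

variable {f : Fin m → EuclideanSpace ℝ (Fin p) → EuclideanSpace ℝ (Fin p)}
  {r : Fin m → ℝ} {F : Set (EuclideanSpace ℝ (Fin p))}

@[simp] lemma rr_nil : rr r [] = 1 := by simp [rr]

@[simp] lemma rr_cons {i : Fin m} {w : List (Fin m)} : rr r (i :: w) = r i * rr r w := by
  simp [rr]

lemma rr_append {u v : List (Fin m)} : rr r (u ++ v) = rr r u * rr r v := by
  simp [rr]

lemma rr_pos (hr : ∀ i, 0 < r i) : ∀ w : List (Fin m), 0 < rr r w
  | [] => by simp
  | i :: w => by simpa using mul_pos (hr i) (rr_pos hr w)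

lemma rr_le_one (hr : ∀ i, 0 < r i ∧ r i < 1) : ∀ w : List (Fin m), rr r w ≤ 1
  | [] => by simp
  | i :: w => by
    simp only [rr_cons]
    have h1 := rr_pos (fun i => (hr i).1) w
    have := rr_le_one hr w
    nlinarith [(hr i).1, (hr i).2]

lemma rr_le_pow {ν : ℝ} (hr : ∀ i, 0 < r i) (hν : ∀ i, r i ≤ ν) :
    ∀ w : List (Fin m), rr r w ≤ ν ^ w.length
  | [] => by simp
  | i :: w => by
    simp only [rr_cons, List.length_cons, pow_succ]
    have h1 := rr_pos hr w
    have h2 := rr_le_pow hr hν w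
    have h3 := hr i
    have h4 := hν i
    nlinarith

lemma rr_prefix (hr : ∀ i, 0 < r i ∧ r i < 1) {u v : List (Fin m)} (h : u <+: v) :
    rr r v ≤ rr r u := by
  obtain ⟨t, rfl⟩ := h
  rw [rr_append]
  have h1 := rr_pos (fun i => (hr i).1) u
  have h2 := rr_le_one hr t
  have h3 := rr_pos (fun i => (hr i).1) t
  nlinarith

lemma gw_cons_apply {i : Fin m} {w : List (Fin m)} (x : EuclideanSpace ℝ (Fin p)) :
    gw f (i :: w) x = f i (gw f w x) := rfl

lemma gw_append {u v : List (Fin m)} (x : EuclideanSpace ℝ (Fin p)) :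
    gw f (u ++ v) x = gw f u (gw f v x) := by
  induction u with
  | nil => rfl
  | cons i u ih => simp [gw_cons_apply, ih]

lemma gw_dist (hsim : ∀ i, ∀ x y, dist (f i x) (f i y) = r i * dist x y) :
    ∀ (w : List (Fin m)) (x y : EuclideanSpace ℝ (Fin p)),
      dist (gw f w x) (gw f w y) = rr r w * dist x y
  | [], x, y => by simp [gw]
  | i :: w, x, y => by
    rw [gw_cons_apply, gw_cons_apply, hsim, gw_dist hsim w, rr_cons, mul_assoc]

lemma gw_image_subset (hinv : F = ⋃ i, f i '' F) :
    ∀ w : List (Fin m), gw f w '' F ⊆ F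
  | [] => by simp [gw]
  | i :: w => by
    have h1 : gw f (i :: w) '' F = f i '' (gw f w '' F) := by
      rw [Set.image_image]; rfl
    rw [h1]
    intro x hx
    obtain ⟨y, hy, rfl⟩ := hx
    have : f i y ∈ f i '' F := ⟨y, gw_image_subset hinv w hy, rfl⟩
    rw [hinv]
    exact Set.mem_iUnion.2 ⟨i, this⟩

lemma gw_mono (hinv : F = ⋃ i, f i '' F) {u v : List (Fin m)} (h : u <+: v) :
    gw f v '' F ⊆ gw f u '' F := by
  obtain ⟨t, rfl⟩ := h
  intro x hx
  obtain ⟨y, hy, rfl⟩ := hx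
  exact ⟨gw f t y, gw_image_subset hinv t ⟨y, hy, rfl⟩, (gw_append y).symm⟩

lemma lcp_prefix_left : ∀ w w' : List (Fin m), lcp w w' <+: w
  | [], _ => by simp [lcp]
  | _ :: _, [] => by simp [lcp]
  | a :: s, b :: t => by
    by_cases h : a = b
    · subst h
      simpa [lcp] using lcp_prefix_left s t
    · simp [lcp, h]

lemma lcp_eq_left : ∀ w w' : List (Fin m), lcp w w' = w → w <+: w'
  | [], w', _ => List.nil_prefix
  | a :: s, [], h => by simp [lcp] at h
  | a :: s, b :: t, h => by
    by_cases hab : a = b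
    · subst hab
      have h' : lcp s t = s := by simpa [lcp] using h
      exact List.cons_prefix_cons.2 ⟨rfl, lcp_eq_left s t h'⟩
    · simp [lcp, hab] at h

lemma sep_lemma {δ : ℝ} (hr : ∀ i, 0 < r i ∧ r i < 1)
    (hsim : ∀ i, ∀ x y, dist (f i x) (f i y) = r i * dist x y)
    (hinv : F = ⋃ i, f i '' F)
    (hδ : ∀ i j, i ≠ j → ∀ x ∈ f i '' F, ∀ y ∈ f j '' F, δ ≤ dist x y) :
    ∀ w w' : List (Fin m), ¬ w <+: w' → ¬ w' <+: w →
      ∀ x ∈ gw f w '' F, ∀ y ∈ gw f w' '' F, δ * rr r (lcp w w') ≤ dist x y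
  | [], w', h1, _ => absurd List.nil_prefix h1
  | _ :: _, [], _, h2 => absurd List.nil_prefix h2
  | a :: s, b :: t, h1, h2 => by
    intro x hx y hy
    obtain ⟨x0, hx0, rfl⟩ := hx
    obtain ⟨y0, hy0, rfl⟩ := hy
    by_cases hab : a = b
    · subst hab
      have hs : ¬ s <+: t := fun h => h1 (List.cons_prefix_cons.2 ⟨rfl, h⟩)
      have ht : ¬ t <+: s := fun h => h2 (List.cons_prefix_cons.2 ⟨rfl, h⟩)
      have ih := sep_lemma hr hsim hinv hδ s t hs ht (gw f s x0) ⟨x0, hx0, rfl⟩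
        (gw f t y0) ⟨y0, hy0, rfl⟩
      rw [gw_cons_apply, gw_cons_apply, hsim]
      have : lcp (a :: s) (a :: t) = a :: lcp s t := by simp [lcp]
      rw [this, rr_cons]
      calc δ * (r a * rr r (lcp s t)) = r a * (δ * rr r (lcp s t)) := by ring
        _ ≤ r a * dist (gw f s x0) (gw f t y0) :=
            mul_le_mul_of_nonneg_left ih (hr a).1.le
    · have : lcp (a :: s) (b :: t) = [] := by simp [lcp, hab]
      rw [this, rr_nil, mul_one]
      exact hδ a b (by simpa using hab) _
        ⟨gw f s x0, gw_image_subset hinv s ⟨x0, hx0, rfl⟩, rfl⟩ _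
        ⟨gw f t y0, gw_image_subset hinv t ⟨y0, hy0, rfl⟩, rfl⟩

end Stmt8Aux

open Stmt8Aux in
/-- If `f₁, …, f_m` are contracting similarities on `ℝ^p` whose
attractor `F` satisfies the strong separation condition, then `F` admits a
`(ν, ν)` separated structure for some `0 < ν < 1`. -/
theorem stmt8 {p : ℕ} (m : ℕ) (hm : 0 < m)
    (f : Fin m → EuclideanSpace ℝ (Fin p) → EuclideanSpace ℝ (Fin p))
    (r : Fin m → ℝ) (hr : ∀ i, 0 < r i ∧ r i < 1)
    (hsim : ∀ i, ∀ x y, dist (f i x) (f i y) = r i * dist x y)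
    (F : Set (EuclideanSpace ℝ (Fin p))) (hFne : F.Nonempty) (hFc : IsCompact F)
    (hinv : F = ⋃ i, f i '' F)
    (hssc : ∀ i j, i ≠ j → Disjoint (f i '' F) (f j '' F)) :
    ∃ ν : ℝ, 0 < ν ∧ ν < 1 ∧ SepStructure ν ν F := by
  classical
  -- the maps are continuous
  have hcont : ∀ i, Continuous (f i) := by
    intro i
    refine (LipschitzWith.of_dist_le_mul (K := (r i).toNNReal) fun x y => ?_).continuous
    rw [Real.coe_toNNReal _ (hr i).1.le, hsim]
  have hFimc : ∀ i, IsCompact (f i '' F) := fun i => hFc.image (hcont i)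
  -- a uniform positive separation between distinct first-level pieces
  obtain ⟨δ, hδ0, hδ⟩ : ∃ δ : ℝ, 0 < δ ∧
      ∀ i j, i ≠ j → ∀ x ∈ f i '' F, ∀ y ∈ f j '' F, δ ≤ dist x y := by
    have key : ∀ q : Fin m × Fin m, q.1 ≠ q.2 → ∃ δ : ℝ, 0 < δ ∧
        ∀ x ∈ f q.1 '' F, ∀ y ∈ f q.2 '' F, δ ≤ dist x y := by
      rintro ⟨i, j⟩ hij
      obtain ⟨ε, hε0, hε⟩ := EMetric.exists_pos_forall_lt_edist (hFimc i)
        (hFimc j).isClosed (hssc i j hij)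
      refine ⟨ε, by exact_mod_cast hε0, fun x hx y hy => ?_⟩
      have := hε x hx y hy
      rw [edist_dist, ← ENNReal.ofReal_coe_nnreal] at this
      exact ((ENNReal.ofReal_lt_ofReal_iff_of_nonneg ε.2).mp this).le
    set P : Finset (Fin m × Fin m) :=
      (Finset.univ ×ˢ Finset.univ).filter (fun q => q.1 ≠ q.2) with hP
    set D : Fin m × Fin m → ℝ := fun q =>
      if h : q.1 ≠ q.2 then (key q h).choose else 1 with hD
    have hDpos : ∀ q, 0 < D q := by
      intro q
      by_cases h : q.1 ≠ q.2
      · simp only [hD]; rw [dif_pos h]; exact (key q h).choose_spec.1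
      · simp only [hD]; rw [dif_neg h]; exact one_pos
    by_cases hPne : P.Nonempty
    · refine ⟨P.inf' hPne D, ?_, ?_⟩
      · exact (Finset.lt_inf'_iff hPne).2 fun q _ => hDpos q
      · intro i j hij x hx y hy
        have hmem : (i, j) ∈ P := by simp [hP, hij]
        have h1 : P.inf' hPne D ≤ D (i, j) := Finset.inf'_le _ hmem
        have h2 : D (i, j) ≤ dist x y := by
          have : D (i, j) = (key (i, j) hij).choose := by simp [hD, hij]
          rw [this]
          exact (key (i, j) hij).choose_spec.2 x hx y hy
        linarith
    · refine ⟨1, one_pos, fun i j hij x hx y hy => ?_⟩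
      exact absurd (by simp [hP, hij] : (i, j) ∈ P) (fun h => hPne ⟨_, h⟩)
  -- the contraction ratio ν
  have huniv : (Finset.univ : Finset (Fin m)).Nonempty := ⟨⟨0, hm⟩, Finset.mem_univ _⟩
  obtain ⟨ν, hν0, hν1, hrν⟩ : ∃ ν : ℝ, 0 < ν ∧ ν < 1 ∧ ∀ i, r i ≤ ν := by
    refine ⟨Finset.univ.sup' huniv r, ?_, ?_, ?_⟩
    · exact lt_of_lt_of_le (hr ⟨0, hm⟩).1 (Finset.le_sup' r (Finset.mem_univ _))
    · exact (Finset.sup'_lt_iff huniv).2 fun i _ => (hr i).2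
    · exact fun i => Finset.le_sup' r (Finset.mem_univ i)
  refine ⟨ν, hν0, hν1, ?_⟩
  have hdF0 : 0 ≤ Metric.diam F := Metric.diam_nonneg
  obtain ⟨K, hK0, hKdF, hKδ⟩ :
      ∃ K : ℝ, 0 < K ∧ Metric.diam F < K ∧ 1 / K ≤ δ / 2 := by
    have h2δ : 0 < 2 / δ := by positivity
    refine ⟨Metric.diam F + 1 + 2 / δ, by positivity, by linarith, ?_⟩
    rw [div_le_div_iff₀ (by positivity) two_pos]
    calc (1 : ℝ) * 2 = δ * (2 / δ) := by field_simp
      _ ≤ δ * (Metric.diam F + 1 + 2 / δ) := by nlinarith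
  refine ⟨K, hK0, fun k => ?_⟩
  have hνk : (0:ℝ) < ν ^ k := pow_pos hν0 k
  -- the stopping-time family of words
  set W : Set (List (Fin m)) :=
    {w | rr r w ≤ ν ^ k ∧ ∀ u, u <+: w → u ≠ w → ν ^ k < rr r u} with hW
  -- every word in W has length at most k
  have hlen : ∀ w ∈ W, w.length ≤ k := by
    intro w hw
    by_contra hlt
    push_neg at hlt
    have hw1 : 1 ≤ w.length := le_trans (Nat.succ_le_succ (Nat.zero_le k)) hlt
    set u := w.take (w.length - 1) with hu
    have hul : u.length = w.length - 1 := by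
      simp [hu, Nat.min_eq_left (Nat.sub_le _ _)]
    have hune : u ≠ w := by
      intro h
      have := congrArg List.length h
      omega
    have h1 : ν ^ k < rr r u := hw.2 u (List.take_prefix _ _) hune
    have h2 : rr r u ≤ ν ^ u.length :=
      rr_le_pow (fun i => (hr i).1) hrν u
    have h3 : ν ^ u.length ≤ ν ^ k := by
      exact pow_le_pow_of_le_one hν0.le hν1.le (by omega)
    linarith
  have hWfin : W.Finite := (List.finite_length_le (Fin m) k).subset hlen
  have hWim : ((fun w => gw f w '' F) '' W).Finite := hWfin.image _
  refine ⟨hWim.toFinset, ?_, ?_, ?_⟩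
  -- covering
  · intro x hx
    have hany : ∀ n, ∀ x ∈ F, ∃ w : List (Fin m), w.length = n ∧ x ∈ gw f w '' F := by
      intro n
      induction n with
      | zero => exact fun x hx => ⟨[], rfl, by simpa [gw] using hx⟩
      | succ n ih =>
        intro x hx
        rw [hinv] at hx
        obtain ⟨i, y, hy, rfl⟩ := Set.mem_iUnion.1 hx
        obtain ⟨w, hwl, z, hz, hzw⟩ := ih y hy
        exact ⟨i :: w, by simp [hwl], z, hz, by rw [gw_cons_apply, hzw]⟩
    obtain ⟨w, hwl, hxw⟩ := hany k x hx
    have hPk : rr r (w.take w.length) ≤ ν ^ k := by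
      rw [List.take_length, ← hwl]
      exact rr_le_pow (fun i => (hr i).1) hrν w
    have hEx : ∃ n, rr r (w.take n) ≤ ν ^ k := ⟨w.length, hPk⟩
    set j := Nat.find hEx with hj
    have hjspec : rr r (w.take j) ≤ ν ^ k := Nat.find_spec hEx
    have hjle : j ≤ w.length := Nat.find_min' _ hPk
    have hmemW : w.take j ∈ W := by
      refine ⟨hjspec, fun u hu hune => ?_⟩
      have hulej : u.length ≤ j := by
        have h0 := hu.length_le
        rw [List.length_take] at h0
        omega
      have huform : u = w.take u.length :=
        List.prefix_iff_eq_take.1 (hu.trans (List.take_prefix j w))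
      have hultj : u.length < j := by
        rcases lt_or_eq_of_le hulej with h | h
        · exact h
        · exact absurd (by rw [huform, h]) hune
      have hfm := Nat.find_min hEx hultj
      push_neg at hfm
      rwa [← huform] at hfm
    have hmemS : gw f (w.take j) '' F ∈ hWim.toFinset := by
      rw [Set.Finite.mem_toFinset]
      exact ⟨w.take j, hmemW, rfl⟩
    exact Set.mem_biUnion hmemS (gw_mono hinv (List.take_prefix j w) hxw)
  -- small diameters
  · intro A hA
    rw [Set.Finite.mem_toFinset] at hA
    obtain ⟨w, hwW, rfl⟩ := hA
    have hle : EMetric.diam (gw f w '' F) ≤ ENNReal.ofReal (ν ^ k * Metric.diam F) := by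
      apply EMetric.diam_le
      rintro a ⟨x, hx, rfl⟩ b ⟨y, hy, rfl⟩
      rw [edist_dist]
      apply ENNReal.ofReal_le_ofReal
      rw [gw_dist hsim]
      have h1 : dist x y ≤ Metric.diam F := Metric.dist_le_diam_of_mem hFc.isBounded hx hy
      have h2 : rr r w ≤ ν ^ k := hwW.1
      have h3 : 0 < rr r w := rr_pos (fun i => (hr i).1) w
      nlinarith [dist_nonneg (x := x) (y := y)]
    refine lt_of_le_of_lt hle ?_
    rw [ENNReal.ofReal_lt_ofReal_iff (mul_pos hK0 hνk)]
    nlinarith [mul_pos (sub_pos.2 hKdF) hνk]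
  -- separation
  · intro A hA B hB hAB
    rw [Set.Finite.mem_toFinset] at hA hB
    obtain ⟨w, hwW, rfl⟩ := hA
    obtain ⟨w', hw'W, rfl⟩ := hB
    have hne : w ≠ w' := fun h => hAB (by rw [h])
    have h1 : ¬ w <+: w' := fun h => absurd hwW.1 (not_le.2 (hw'W.2 w h hne))
    have h2 : ¬ w' <+: w := fun h => absurd hw'W.1 (not_le.2 (hwW.2 w' h (Ne.symm hne)))
    set c := lcp w w' with hc
    have hcp : c <+: w := lcp_prefix_left w w'
    have hcne : c ≠ w := fun h => h1 (lcp_eq_left w w' h)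
    have hcrr : ν ^ k < rr r c := hwW.2 c hcp hcne
    have hc0 : 0 < rr r c := rr_pos (fun i => (hr i).1) c
    have hsep := sep_lemma hr hsim hinv hδ w w' h1 h2
    have hlow : ENNReal.ofReal (δ * rr r c) ≤
        ⨅ x ∈ gw f w '' F, EMetric.infEdist x (gw f w' '' F) := by
      refine le_iInf₂ fun x hx => EMetric.le_infEdist.mpr fun y hy => ?_
      rw [edist_dist]
      exact ENNReal.ofReal_le_ofReal (hsep x hx y hy)
    refine lt_of_lt_of_le ?_ hlow
    rw [ENNReal.ofReal_lt_ofReal_iff (mul_pos hδ0 hc0)]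
    nlinarith [mul_pos hδ0 (sub_pos.2 hcrr), mul_nonneg (sub_nonneg.2 hKδ) hνk.le,
      mul_nonneg (half_pos hδ0).le hνk.le]
end
end

section
/- Assume F ⊆ ℝ^p is nonempty compact and admits a (ν, ρ) separated structure, and let 0 < α < log ν / log ρ. Then the piecewise constant functions with finitely many pieces are dense among the 1-Hölder-α functions on F: for every 1-Hölder-α function f : F → ℝ and every ε > 0 there exists a 1-Hölder-α function g : F → ℝ with finite range (constant on each element of one of the finite families 𝒮_k) such that ‖f − g‖_∞ < ε. -/
/-!
Fix a scale `k` and write `D = K ν ^ k`, `s = ρ ^ k / K` for the size of the pieces of `𝒮_k`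
and the gap between them; `g` is built to be constant on the pieces.

If `α ≤ 1`, let `g` be the largest function below `f` that is `1`-Lipschitz for the jump cost
(`0` inside a piece, `dist ^ α` between pieces): the infimum of `f` at the end of a chain plus
the cost of the chain. It is Hölder and constant on the pieces. It stays close to `f` because a
chain from `x` to `z` with `N` jumps has `dist x z ≤ (total jump length) + (N + 1) D`, while its
cost dominates both `(total jump length) ^ α` (subadditivity of `t ↦ t ^ α`) and `N s ^ α`;
so `dist x z ^ α` exceeds the cost only by `o(1)` since `D / s ^ α → 0`, which is `ν < ρ ^ α`.

If `α > 1`, then `ν < ρ ^ α < ρ`. Composing `f` with a choice of representative in each piece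
is `(1 + 2 D / s) ^ α`-Hölder, and shrinking it towards a fixed value by that factor makes it
`1`-Hölder at a cost `O(1 - (1 + 2 D / s) ^ (-α)) = o(1)`, since `D / s → 0`.
-/

noncomputable section

open Finset Filter Topology

lemma Function.FactorsThrough.finite_range {α β γ : Type*} {f : α → β} {g : α → γ}
    (hg : g.FactorsThrough f) (hf : (Set.range f).Finite) : (Set.range g).Finite := by
  have := hf.to_subtype
  refine (Set.finite_range fun b : Set.range f => g b.2.choose).subset ?_
  rintro _ ⟨a, rfl⟩
  exact ⟨⟨f a, a, rfl⟩, hg (Exists.choose_spec (⟨a, rfl⟩ : ∃ a', f a' = f a))⟩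

variable {X ι : Type*} [PseudoMetricSpace X]

structure IsSeparatedPartition (π : X → ι) (D s : ℝ) : Prop where
  finite_range : (Set.range π).Finite
  dist_le_of_eq : ∀ x y, π x = π y → dist x y ≤ D
  le_dist_of_ne : ∀ x y, π x ≠ π y → s ≤ dist x y

section Chains

variable [DecidableEq ι] (π : X → ι) (α : ℝ)

def jumpCost (x y : X) : ℝ := if π x = π y then 0 else dist x y ^ α

/-- Since `t ^ 0 = 1` for all `t`, `chainCost π 0 u n` is the number of jumps of the chain. -/
def chainCost (u : ℕ → X) (n : ℕ) : ℝ := ∑ i ∈ range n, jumpCost π α (u i) (u (i + 1))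

variable {π α}

lemma jumpCost_of_eq {x y : X} (h : π x = π y) : jumpCost π α x y = 0 := if_pos h

lemma jumpCost_of_ne {x y : X} (h : π x ≠ π y) : jumpCost π α x y = dist x y ^ α := if_neg h

lemma jumpCost_nonneg (x y : X) : 0 ≤ jumpCost π α x y := by
  unfold jumpCost; split_ifs <;> positivity

lemma jumpCost_le (x y : X) : jumpCost π α x y ≤ dist x y ^ α := by
  unfold jumpCost; split_ifs
  · positivity
  · exact le_rfl

lemma chainCost_nonneg (u : ℕ → X) (n : ℕ) : 0 ≤ chainCost π α u n :=
  sum_nonneg fun _ _ => jumpCost_nonneg _ _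

lemma chainCost_succ (u : ℕ → X) (n : ℕ) :
    chainCost π α u (n + 1) = chainCost π α u n + jumpCost π α (u n) (u (n + 1)) :=
  sum_range_succ _ _

lemma chainCost_one_rpow_le (hα0 : 0 < α) (hα1 : α ≤ 1) (u : ℕ → X) (n : ℕ) :
    chainCost π 1 u n ^ α ≤ chainCost π α u n := by
  induction n with
  | zero => simp [chainCost, Real.zero_rpow hα0.ne']
  | succ n ih =>
    have hjump : jumpCost π 1 (u n) (u (n + 1)) ^ α = jumpCost π α (u n) (u (n + 1)) := by
      unfold jumpCost; split_ifs
      · exact Real.zero_rpow hα0.ne'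
      · rw [Real.rpow_one]
    rw [chainCost_succ, chainCost_succ, ← hjump]
    calc _ ≤ chainCost π 1 u n ^ α + jumpCost π 1 (u n) (u (n + 1)) ^ α :=
          Real.rpow_add_le_add_rpow (chainCost_nonneg _ _) (jumpCost_nonneg _ _) hα0.le hα1
      _ ≤ _ := by gcongr

lemma rpow_mul_chainCost_zero_le {s : ℝ} (hs : 0 ≤ s) (hα : 0 ≤ α)
    (hsep : ∀ x y, π x ≠ π y → s ≤ dist x y) (u : ℕ → X) (n : ℕ) :
    s ^ α * chainCost π 0 u n ≤ chainCost π α u n := by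
  rw [chainCost, mul_sum]
  refine sum_le_sum fun i _ => ?_
  by_cases h : π (u i) = π (u (i + 1))
  · simp [jumpCost_of_eq h]
  · rw [jumpCost_of_ne h, jumpCost_of_ne h, Real.rpow_zero, mul_one]
    exact Real.rpow_le_rpow hs (hsep _ _ h) hα

lemma dist_le_chainCost {D : ℝ} (hdiam : ∀ x y, π x = π y → dist x y ≤ D) (u : ℕ → X) (n : ℕ)
    {w : X} (hw : π w = π (u n)) :
    dist (u 0) w ≤ chainCost π 1 u n + (chainCost π 0 u n + 1) * D := by
  induction n generalizing w with
  | zero => simpa [chainCost] using hdiam _ _ hw.symm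
  | succ n ih =>
    rw [chainCost_succ, chainCost_succ]
    by_cases h : π (u n) = π (u (n + 1))
    · simpa [jumpCost_of_eq h] using ih (hw.trans h.symm)
    · rw [jumpCost_of_ne h, jumpCost_of_ne h, Real.rpow_one, Real.rpow_zero]
      have := ih (w := u n) rfl
      have := hdiam _ _ hw.symm
      have := dist_triangle4 (u 0) (u n) (u (n + 1)) w
      linarith

end Chains

lemma IsSeparatedPartition.dist_rpow_le_chainCost_add [DecidableEq ι] {π : X → ι} {α D s B h : ℝ}
    (hπ : IsSeparatedPartition π D s) (hs : 0 ≤ s) (hα0 : 0 < α) (hα1 : α ≤ 1)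
    (hB : ∀ x y : X, dist x y ≤ B) (hh : 0 < h) (hDh : 2 * D ≤ h)
    (hDB : 2 * D * B ^ α ≤ h * s ^ α) (u : ℕ → X) (n : ℕ) :
    dist (u 0) (u n) ^ α ≤ chainCost π α u n + h ^ α := by
  set N := chainCost π 0 u n
  have hN : 0 ≤ N := chainCost_nonneg u n
  have hD : 0 ≤ D := by simpa using hπ.dist_le_of_eq (u 0) (u 0) rfl
  have hdist := dist_le_chainCost hπ.dist_le_of_eq u n rfl
  have hjumps := rpow_mul_chainCost_zero_le hs hα0.le hπ.le_dist_of_ne u n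
  by_cases hshort : (N + 1) * D ≤ h
  · calc dist (u 0) (u n) ^ α ≤ (chainCost π 1 u n + (N + 1) * D) ^ α := by gcongr
      _ ≤ chainCost π 1 u n ^ α + ((N + 1) * D) ^ α :=
          Real.rpow_add_le_add_rpow (chainCost_nonneg u n) (by positivity) hα0.le hα1
      _ ≤ chainCost π α u n + h ^ α := by
          gcongr
          exact chainCost_one_rpow_le hα0 hα1 u n
  · -- there are many jumps, and each of them costs at least `s ^ α`
    have hmany : h < 2 * N * D := by linarith
    have hBN : B ^ α ≤ N * s ^ α := by
      refine le_of_mul_le_mul_left ?_ hh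
      have hB0 : 0 ≤ B := dist_nonneg.trans (hB (u 0) (u 0))
      calc h * B ^ α ≤ 2 * N * D * B ^ α :=
            mul_le_mul_of_nonneg_right hmany.le (Real.rpow_nonneg hB0 α)
        _ = N * (2 * D * B ^ α) := by ring
        _ ≤ N * (h * s ^ α) := by gcongr
        _ = h * (N * s ^ α) := by ring
    calc dist (u 0) (u n) ^ α ≤ B ^ α := by gcongr; exact hB _ _
      _ ≤ chainCost π α u n := by linarith
      _ ≤ chainCost π α u n + h ^ α := le_add_of_nonneg_right (by positivity)

section Envelope

variable [DecidableEq ι] (π : X → ι) (α : ℝ) (f : X → ℝ)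

def chainValues (x : X) : Set ℝ := {c | ∃ n u, u 0 = x ∧ f (u n) + chainCost π α u n = c}

def chainEnvelope (x : X) : ℝ := sInf (chainValues π α f x)

variable {π α f}

lemma self_mem_chainValues (x : X) : f x ∈ chainValues π α f x :=
  ⟨0, fun _ => x, rfl, by simp [chainCost]⟩

lemma jumpCost_add_mem_chainValues {y : X} {c : ℝ} (hc : c ∈ chainValues π α f y) (x : X) :
    jumpCost π α x y + c ∈ chainValues π α f x := by
  obtain ⟨n, u, rfl, rfl⟩ := hc
  refine ⟨n + 1, fun | 0 => x | i + 1 => u i, rfl, ?_⟩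
  simp only [chainCost, sum_range_succ' _ n]
  ring

lemma chainEnvelope_le_self {x : X} (hbdd : BddBelow (chainValues π α f x)) :
    chainEnvelope π α f x ≤ f x :=
  csInf_le hbdd (self_mem_chainValues x)

lemma chainEnvelope_le_jumpCost_add {x : X} (hbdd : BddBelow (chainValues π α f x)) (y : X) :
    chainEnvelope π α f x ≤ jumpCost π α x y + chainEnvelope π α f y := by
  have : chainEnvelope π α f x - jumpCost π α x y ≤ chainEnvelope π α f y := by
    refine le_csInf ⟨_, self_mem_chainValues y⟩ fun c hc => ?_
    have := csInf_le hbdd (jumpCost_add_mem_chainValues hc x)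
    rw [chainEnvelope]
    linarith
  linarith

end Envelope

theorem IsSeparatedPartition.exists_holder_finite_range_of_le_one {π : X → ι} {α D s B h : ℝ}
    (hπ : IsSeparatedPartition π D s) (hs : 0 ≤ s) (hα0 : 0 < α) (hα1 : α ≤ 1)
    (hB : ∀ x y : X, dist x y ≤ B) (hh : 0 < h) (hDh : 2 * D ≤ h)
    (hDB : 2 * D * B ^ α ≤ h * s ^ α) {f : X → ℝ} (hf : ∀ x y, |f x - f y| ≤ dist x y ^ α) :
    ∃ g : X → ℝ, (∀ x y, |g x - g y| ≤ dist x y ^ α) ∧ (Set.range g).Finite ∧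
      ∀ x, |f x - g x| ≤ h ^ α := by
  classical
  have hlow (x : X) : ∀ c ∈ chainValues π α f x, f x - h ^ α ≤ c := by
    rintro _ ⟨n, u, rfl, rfl⟩
    have := hπ.dist_rpow_le_chainCost_add hs hα0 hα1 hB hh hDh hDB u n
    have := (abs_sub_le_iff.mp (hf (u 0) (u n))).1
    linarith
  have hstep (x y : X) := chainEnvelope_le_jumpCost_add ⟨_, hlow x⟩ y
  have hconst : (chainEnvelope π α f).FactorsThrough π := fun x y hxy => by
    have hxy' := hstep x y
    have hyx' := hstep y x
    rw [jumpCost_of_eq hxy, zero_add] at hxy'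
    rw [jumpCost_of_eq hxy.symm, zero_add] at hyx'
    exact le_antisymm hxy' hyx'
  refine ⟨chainEnvelope π α f, fun x y => ?_, hconst.finite_range hπ.finite_range, fun x => ?_⟩
  · have hyx := jumpCost_le (π := π) (α := α) y x
    rw [dist_comm] at hyx
    rw [abs_sub_le_iff]
    exact ⟨by linarith [hstep x y, jumpCost_le (π := π) (α := α) x y], by linarith [hstep y x]⟩
  · have hle := chainEnvelope_le_self (π := π) (α := α) ⟨_, hlow x⟩
    have hge := le_csInf ⟨_, self_mem_chainValues x⟩ (hlow x)
    rw [abs_sub_le_iff]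
    exact ⟨sub_le_comm.mp hge, by linarith [Real.rpow_nonneg hh.le α]⟩

theorem IsSeparatedPartition.exists_holder_finite_range_abs_sub_le {π : X → ι} {α D s B : ℝ}
    (hπ : IsSeparatedPartition π D s) (hs : 0 < s) (hα : 0 ≤ α) (hB : ∀ x y : X, dist x y ≤ B)
    {f : X → ℝ} (hf : ∀ x y, |f x - f y| ≤ dist x y ^ α) (x₀ : X) :
    ∃ g : X → ℝ, (∀ x y, |g x - g y| ≤ dist x y ^ α) ∧ (Set.range g).Finite ∧
      ∀ x, |f x - g x| ≤ D ^ α + B ^ α * (1 - ((1 + 2 * D / s) ^ α)⁻¹) := by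
  have : Nonempty X := ⟨x₀⟩
  set r : X → X := fun x => Function.invFun π (π x)
  have hr (x : X) : π (r x) = π x := Function.invFun_eq ⟨x, rfl⟩
  have hD : 0 ≤ D := by simpa using hπ.dist_le_of_eq x₀ x₀ rfl
  set c := (1 + 2 * D / s) ^ α
  have hc : 1 ≤ c := Real.one_le_rpow (le_add_of_nonneg_right (by positivity)) hα
  have hc0 : 0 < c := one_pos.trans_le hc
  have hfr (x y : X) : |f (r x) - f (r y)| ≤ c * dist x y ^ α := by
    by_cases hxy : π x = π y
    · rw [show r x = r y by simp only [r, hxy], sub_self, abs_zero]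
      positivity
    · have hsd := hπ.le_dist_of_ne x y hxy
      have hrr : dist (r x) (r y) ≤ (1 + 2 * D / s) * dist x y := by
        have h2D : 2 * D ≤ 2 * D / s * dist x y := by
          rw [div_mul_eq_mul_div, le_div_iff₀ hs]
          gcongr
        calc dist (r x) (r y) ≤ dist (r x) x + dist x y + dist y (r y) := dist_triangle4 _ _ _ _
          _ ≤ D + dist x y + D := by
              gcongr
              · exact hπ.dist_le_of_eq _ _ (hr x)
              · exact hπ.dist_le_of_eq _ _ (hr y).symm
          _ ≤ (1 + 2 * D / s) * dist x y := by linarith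
      calc |f (r x) - f (r y)| ≤ dist (r x) (r y) ^ α := hf _ _
        _ ≤ ((1 + 2 * D / s) * dist x y) ^ α := by gcongr
        _ = c * dist x y ^ α := Real.mul_rpow (by positivity) dist_nonneg
  refine ⟨fun x => f x₀ + (f (r x) - f x₀) / c, fun x y => ?_,
    Function.FactorsThrough.finite_range (fun x y hxy => by simp only [r, hxy]) hπ.finite_range,
    fun x => ?_⟩
  · rw [add_sub_add_left_eq_sub, ← sub_div, sub_sub_sub_cancel_right, abs_div, abs_of_pos hc0,
      div_le_iff₀' hc0]
    exact hfr x y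
  · have hshrink : f (r x) - (f x₀ + (f (r x) - f x₀) / c) = (f (r x) - f x₀) * (1 - c⁻¹) := by
      field_simp
      ring
    have hc' : 0 ≤ 1 - c⁻¹ := sub_nonneg.mpr (inv_le_one_of_one_le₀ hc)
    calc |f x - (f x₀ + (f (r x) - f x₀) / c)|
        ≤ |f x - f (r x)| + |f (r x) - (f x₀ + (f (r x) - f x₀) / c)| := abs_sub_le _ _ _
      _ ≤ D ^ α + B ^ α * (1 - c⁻¹) := by
        rw [hshrink, abs_mul, abs_of_nonneg hc']
        gcongr
        · exact (hf _ _).trans (by gcongr; exact hπ.dist_le_of_eq _ _ (hr x).symm)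
        · exact (hf _ _).trans (by gcongr; exact hB _ _)

lemma tendsto_mul_pow_div_div_pow_rpow {K ν ρ β : ℝ} (hK : 0 < K) (hν : 0 ≤ ν) (hρ : 0 < ρ)
    (hνρ : ν < ρ ^ β) : Tendsto (fun k : ℕ => K * ν ^ k / (ρ ^ k / K) ^ β) atTop (𝓝 0) := by
  have hρβ : 0 < ρ ^ β := Real.rpow_pos_of_pos hρ β
  have hgeom := (tendsto_pow_atTop_nhds_zero_of_lt_one (div_nonneg hν hρβ.le)
    ((div_lt_one hρβ).2 hνρ)).const_mul (K * K ^ β)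
  rw [mul_zero] at hgeom
  refine hgeom.congr fun k => ?_
  rw [Real.div_rpow (by positivity) hK.le, ← Real.rpow_pow_comm hρ.le, div_pow]
  have hKβ := Real.rpow_pos_of_pos hK β
  field_simp

lemma tendsto_const_mul_pow (K : ℝ) {ν : ℝ} (hν0 : 0 ≤ ν) (hν1 : ν < 1) :
    Tendsto (fun k : ℕ => K * ν ^ k) atTop (𝓝 0) := by
  simpa using (tendsto_pow_atTop_nhds_zero_of_lt_one hν0 hν1).const_mul K

theorem exists_holder_finite_range_approx_of_le_one {K ν ρ α B ε : ℝ} (hK : 0 < K)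
    (hν0 : 0 ≤ ν) (hν1 : ν < 1) (hρ0 : 0 < ρ) (hα0 : 0 < α) (hα1 : α ≤ 1) (hνρ : ν < ρ ^ α)
    (hpart : ∀ k : ℕ, ∃ π : X → ι, IsSeparatedPartition π (K * ν ^ k) (ρ ^ k / K))
    (hB : ∀ x y : X, dist x y ≤ B) {f : X → ℝ} (hf : ∀ x y, |f x - f y| ≤ dist x y ^ α)
    (hε : 0 < ε) :
    ∃ g : X → ℝ, (∀ x y, |g x - g y| ≤ dist x y ^ α) ∧ (Set.range g).Finite ∧
      ∀ x, |f x - g x| < ε := by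
  set h := (ε / 2) ^ α⁻¹
  have hh : 0 < h := by positivity
  have hhα : h ^ α = ε / 2 := Real.rpow_inv_rpow (by positivity) hα0.ne'
  obtain ⟨k, hkD, hkDs⟩ := (((tendsto_const_mul_pow K hν0 hν1).const_mul 2).eventually_lt_const
      (by simpa using hh)).and
    (((tendsto_mul_pow_div_div_pow_rpow hK hν0 hρ0 hνρ).const_mul (2 * B ^ α)).eventually_lt_const
      (by simpa using hh)) |>.exists
  have hsα : 0 < (ρ ^ k / K) ^ α := by positivity
  have hDs : 2 * (K * ν ^ k) * B ^ α ≤ h * (ρ ^ k / K) ^ α := by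
    have := mul_lt_mul_of_pos_right hkDs hsα
    rw [mul_assoc, div_mul_cancel₀ _ hsα.ne'] at this
    linarith
  obtain ⟨π, hπ⟩ := hpart k
  obtain ⟨g, hg, hfin, hfg⟩ :=
    hπ.exists_holder_finite_range_of_le_one (by positivity) hα0 hα1 hB hh hkD.le hDs hf
  exact ⟨g, hg, hfin, fun x => (hfg x).trans_lt (by linarith)⟩

theorem exists_holder_finite_range_approx_of_lt [Nonempty X] {K ν ρ α B ε : ℝ} (hK : 0 < K)
    (hν0 : 0 ≤ ν) (hν1 : ν < 1) (hρ0 : 0 < ρ) (hα0 : 0 < α) (hνρ : ν < ρ)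
    (hpart : ∀ k : ℕ, ∃ π : X → ι, IsSeparatedPartition π (K * ν ^ k) (ρ ^ k / K))
    (hB : ∀ x y : X, dist x y ≤ B) {f : X → ℝ} (hf : ∀ x y, |f x - f y| ≤ dist x y ^ α)
    (hε : 0 < ε) :
    ∃ g : X → ℝ, (∀ x y, |g x - g y| ≤ dist x y ^ α) ∧ (Set.range g).Finite ∧
      ∀ x, |f x - g x| < ε := by
  have hratio := (tendsto_mul_pow_div_div_pow_rpow hK hν0 hρ0
    (hνρ.trans_eq (Real.rpow_one ρ).symm)).const_mul 2
  simp only [Real.rpow_one, mul_zero, ← mul_div_assoc] at hratio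
  have hfactor := ((tendsto_const_nhds (x := (1 : ℝ))).add hratio).rpow_const (Or.inr hα0.le)
  have herr : Tendsto (fun k : ℕ => (K * ν ^ k) ^ α +
      B ^ α * (1 - ((1 + 2 * (K * ν ^ k) / (ρ ^ k / K)) ^ α)⁻¹)) atTop (𝓝 0) := by
    simpa [Real.zero_rpow hα0.ne'] using
      ((tendsto_const_mul_pow K hν0 hν1).rpow_const (Or.inr hα0.le)).add
        (((tendsto_const_nhds (x := (1 : ℝ))).sub (hfactor.inv₀ (by simp))).const_mul (B ^ α))
  obtain ⟨k, hk⟩ := (herr.eventually_lt_const hε).exists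
  obtain ⟨π, hπ⟩ := hpart k
  obtain ⟨g, hg, hfin, hfg⟩ := hπ.exists_holder_finite_range_abs_sub_le (by positivity) hα0.le
    hB hf (Classical.arbitrary X)
  exact ⟨g, hg, hfin, fun x => (hfg x).trans_lt hk⟩

theorem exists_holder_finite_range_approx [Nonempty X] {K ν ρ α B ε : ℝ} (hK : 0 < K)
    (hν0 : 0 ≤ ν) (hν1 : ν < 1) (hρ0 : 0 < ρ) (hρ1 : ρ < 1) (hα0 : 0 < α) (hνρ : ν < ρ ^ α)
    (hpart : ∀ k : ℕ, ∃ π : X → ι, IsSeparatedPartition π (K * ν ^ k) (ρ ^ k / K))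
    (hB : ∀ x y : X, dist x y ≤ B) {f : X → ℝ} (hf : ∀ x y, |f x - f y| ≤ dist x y ^ α)
    (hε : 0 < ε) :
    ∃ g : X → ℝ, (∀ x y, |g x - g y| ≤ dist x y ^ α) ∧ (Set.range g).Finite ∧
      ∀ x, |f x - g x| < ε := by
  rcases le_or_gt α 1 with hα1 | hα1
  · exact exists_holder_finite_range_approx_of_le_one hK hν0 hν1 hρ0 hα0 hα1 hνρ hpart hB hf hε
  · have hρα : ρ ^ α < ρ := by
      simpa using Real.rpow_lt_rpow_of_exponent_gt hρ0 hρ1 hα1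
    exact exists_holder_finite_range_approx_of_lt hK hν0 hν1 hρ0 hα0 (hνρ.trans hρα) hpart hB hf hε

lemma SepStructure.exists_isSeparatedPartition {p : ℕ} {ν ρ : ℝ}
    {F : Set (EuclideanSpace ℝ (Fin p))} (h : SepStructure ν ρ F) :
    ∃ K > 0, ∀ k : ℕ, ∃ π : F → Set (EuclideanSpace ℝ (Fin p)),
      IsSeparatedPartition π (K * ν ^ k) (ρ ^ k / K) := by
  obtain ⟨K, hK, hS⟩ := h
  refine ⟨K, hK, fun k => ?_⟩
  obtain ⟨S, hcover, hdiam, hsep⟩ := hS k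
  have hmem (x : F) : ∃ A ∈ S, (x : EuclideanSpace ℝ (Fin p)) ∈ A := by
    simpa using hcover x.2
  choose π hπS hxπ using hmem
  refine ⟨π, S.finite_toSet.subset (Set.range_subset_iff.2 hπS), fun x y hxy => ?_,
    fun x y hxy => ?_⟩
  · have hy : (y : EuclideanSpace ℝ (Fin p)) ∈ π x := hxy ▸ hxπ y
    exact (edist_lt_ofReal.1
      ((Metric.edist_le_ediam_of_mem (hxπ x) hy).trans_lt (hdiam _ (hπS x)))).le
  · have hgap := (hsep _ (hπS x) _ (hπS y) hxy).trans_le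
      ((iInf₂_le _ (hxπ x)).trans (Metric.infEDist_le_edist_of_mem (hxπ y)))
    rw [edist_dist, ENNReal.ofReal_lt_ofReal_iff'] at hgap
    rw [div_eq_inv_mul, ← one_div]
    exact hgap.1.le

/-- If `F` is nonempty compact with a `(ν, ρ)` separated structure
and `0 < α < log ν / log ρ`, then the piecewise constant functions with finitely
many pieces (i.e. with finite range on `F`) are dense among the 1-Hölder-α
functions on `F` in the supremum metric. -/
theorem stmt9 {p : ℕ} (F : Set (EuclideanSpace ℝ (Fin p)))
    (hFne : F.Nonempty) (hFc : IsCompact F)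
    (ν ρ : ℝ) (hν0 : 0 < ν) (hν1 : ν < 1) (hρ0 : 0 < ρ) (hρ1 : ρ < 1)
    (hsep : SepStructure ν ρ F)
    (α : ℝ) (hα0 : 0 < α) (hα1 : α < Real.log ν / Real.log ρ)
    (f : EuclideanSpace ℝ (Fin p) → ℝ)
    (hf : ∀ x ∈ F, ∀ y ∈ F, |f x - f y| ≤ dist x y ^ α)
    (ε : ℝ) (hε : 0 < ε) :
    ∃ g : EuclideanSpace ℝ (Fin p) → ℝ,
      (∀ x ∈ F, ∀ y ∈ F, |g x - g y| ≤ dist x y ^ α) ∧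
      (g '' F).Finite ∧
      ∀ x ∈ F, |f x - g x| < ε := by
  classical
  obtain ⟨K, hK, hpart⟩ := hsep.exists_isSeparatedPartition
  have : Nonempty F := hFne.to_subtype
  have hνρ : ν < ρ ^ α :=
    Real.lt_rpow_of_log_lt hρ0 ((lt_div_iff_of_neg (Real.log_neg hρ0 hρ1)).1 hα1)
  have hB (x y : F) : dist x y ≤ Metric.diam F :=
    Metric.dist_le_diam_of_mem hFc.isBounded x.2 y.2
  obtain ⟨g, hg, hfin, hfg⟩ := exists_holder_finite_range_approx hK hν0.le hν1 hρ0 hρ1 hα0 hνρ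
    hpart hB (f := f ∘ (↑)) (fun x y => hf x x.2 y y.2) hε
  refine ⟨fun x => if hx : x ∈ F then g ⟨x, hx⟩ else 0, fun x hx y hy => ?_, ?_, fun x hx => ?_⟩
  · simpa [hx, hy, Subtype.dist_eq] using hg ⟨x, hx⟩ ⟨y, hy⟩
  · exact hfin.subset (by rintro _ ⟨x, hx, rfl⟩; exact ⟨⟨x, hx⟩, by simp [hx]⟩)
  · simpa [hx] using hfg ⟨x, hx⟩

end
end

section
/- Assume F ⊆ ℝ^p is nonempty compact and admits a (ν, ρ) separated structure, and let 0 < α < log ν / log ρ. Then there is a dense Gδ subset 𝒢 of C₁^α(F) such that every f ∈ 𝒢 satisfies λ(f(F)) = 0; consequently D_*(α, F) = 0. -/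
open MeasureTheory

noncomputable section

/-- `C₁^α(F)`: the set of 1-Hölder-α functions `F → ℝ`, as a subset of the bounded
continuous functions on `F` (which carry the supremum metric). -/
def HolderBall (α : ℝ) {p : ℕ} (F : Set (EuclideanSpace ℝ (Fin p))) :
    Set (BoundedContinuousFunction ↥F ℝ) :=
  {f | ∀ x y : ↥F,
    |f x - f y| ≤ dist (x : EuclideanSpace ℝ (Fin p)) (y : EuclideanSpace ℝ (Fin p)) ^ α}

/-- `D_*^f(F) = sup {d : λ{r : dim_H (f⁻¹(r)) ≥ d} > 0}`. -/
def DstarF {p : ℕ} (F : Set (EuclideanSpace ℝ (Fin p))) (f : ↥F → ℝ) : ℝ :=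
  sSup {d : ℝ | 0 < volume {r : ℝ | ENNReal.ofReal d ≤ dimH (Subtype.val '' (f ⁻¹' {r}))}}

/-- `D_*(α, F)`: the supremum over all dense Gδ subsets `G` of `C₁^α(F)` of
`inf {D_*^f(F) : f ∈ G}`. -/
def DStar {p : ℕ} (α : ℝ) (F : Set (EuclideanSpace ℝ (Fin p))) : ℝ :=
  sSup {d : ℝ | ∃ G : Set ↥(HolderBall α F), Dense G ∧ IsGδ G ∧
    d = sInf ((fun g : ↥(HolderBall α F) =>
      DstarF F ⇑(g : BoundedContinuousFunction ↥F ℝ)) '' G)}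


/-!
Functions with finite range have null range, and on a compact space the bounded continuous
functions whose range has measure `< 1/n` form an open set. So it suffices to approximate every
`f ∈ C₁^α(F)` by Hölder functions with finite range; Baire's theorem in the complete space
`C₁^α(F)` then gives the dense Gδ set and forces `D_*(α, F) = 0`.

The approximation is constant on the pieces of `𝒮_k`. Its values only have to be 1-Hölder-`α`
between points of different pieces, which are `ρ^k / K`-apart, up to an error `2 K ν^k` in the
distance. As `α < log ν / log ρ` means `ν < ρ^α`, this error is negligible against
`(ρ^k / K)^α`, and damping the values slightly absorbs it. For `α ≤ 1` the error is first made
linear by replacing `f` with its inf-convolution with `u ↦ min (t u) (u^α)`, which is Lipschitz.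
-/

open Set Filter Topology Asymptotics
open scoped ENNReal BoundedContinuousFunction

theorem ConcaveOn.map_add_le {ω : ℝ → ℝ} (hω : ConcaveOn ℝ (Ici 0) ω) (hω0 : 0 ≤ ω 0)
    {u v : ℝ} (hu : 0 ≤ u) (hv : 0 ≤ v) : ω (u + v) ≤ ω u + ω v := by
  rcases (add_nonneg hu hv).eq_or_lt with h | h
  · obtain ⟨rfl, rfl⟩ : u = 0 ∧ v = 0 := ⟨by linarith, by linarith⟩
    simpa using hω0
  -- `w` is a convex combination of `0` and `u + v`
  have key : ∀ w, 0 ≤ w → w ≤ u + v → w / (u + v) * ω (u + v) ≤ ω w := by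
    intro w hw hwle
    have hθ : w / (u + v) ≤ 1 := (div_le_one h).2 hwle
    have := hω.2 (mem_Ici.2 le_rfl) (mem_Ici.2 h.le) (sub_nonneg.2 hθ) (by positivity)
      (sub_add_cancel 1 (w / (u + v)))
    simp only [smul_eq_mul, mul_zero, zero_add, div_mul_cancel₀ w h.ne'] at this
    nlinarith [sub_nonneg.2 hθ]
  calc ω (u + v) = u / (u + v) * ω (u + v) + v / (u + v) * ω (u + v) := by
        field_simp
    _ ≤ ω u + ω v := add_le_add (key u hu (by linarith)) (key v hv (by linarith))

theorem Real.exists_rpow_le_mul_add {α c : ℝ} (hα0 : 0 < α) (hα1 : α ≤ 1) (hc : 0 < c) :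
    ∃ t > 0, ∀ u, 0 ≤ u → u ^ α ≤ t * u + c := by
  set u₀ := c ^ α⁻¹
  have hu₀ : 0 < u₀ := by positivity
  refine ⟨u₀ ^ (α - 1), by positivity, fun u hu => ?_⟩
  rcases le_total u u₀ with h | h
  · have : u ^ α ≤ c := by
      calc u ^ α ≤ u₀ ^ α := Real.rpow_le_rpow hu h hα0.le
        _ = c := by rw [← Real.rpow_mul hc.le, inv_mul_cancel₀ hα0.ne', Real.rpow_one]
    nlinarith [Real.rpow_nonneg hu₀.le (α - 1)]
  · have hu0 : 0 < u := hu₀.trans_le h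
    calc u ^ α = u ^ (α - 1) * u := by
          rw [← Real.rpow_add_one hu0.ne', sub_add_cancel]
      _ ≤ u₀ ^ (α - 1) * u :=
          mul_le_mul_of_nonneg_right (Real.rpow_le_rpow_of_nonpos hu₀ h (by linarith)) hu
      _ ≤ u₀ ^ (α - 1) * u + c := by linarith

theorem abs_div_one_add_sub_le {δ : ℝ} (hδ : 0 ≤ δ) (x : ℝ) : |x / (1 + δ) - x| ≤ δ * |x| := by
  have h1 : 0 < 1 + δ := by linarith
  rw [show x / (1 + δ) - x = -(δ * x) / (1 + δ) by field_simp; ring, abs_div, abs_neg, abs_mul,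
    abs_of_nonneg hδ, abs_of_pos h1, div_le_iff₀ h1]
  nlinarith [abs_nonneg x, mul_nonneg hδ (abs_nonneg x)]

theorem exists_pos_mul_le {ε : ℝ} (hε : 0 < ε) (B : ℝ) : ∃ δ > 0, δ * B ≤ ε :=
  ⟨ε / (|B| + 1), by positivity, by
    rw [div_mul_eq_mul_div, div_le_iff₀ (by positivity)]
    nlinarith [le_abs_self B]⟩

theorem Real.lt_rpow_of_lt_log_div_log {ν ρ α : ℝ} (hν : 0 < ν) (hρ0 : 0 < ρ) (hρ1 : ρ < 1)
    (hα : α < Real.log ν / Real.log ρ) : ν < ρ ^ α := by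
  have hlog : Real.log ν < α * Real.log ρ := by
    have := (lt_div_iff_of_neg (Real.log_neg hρ0 hρ1)).1 hα
    linarith
  rwa [← Real.log_lt_log_iff hν (by positivity), Real.log_rpow hρ0]

section Quantization

variable {X : Type*} [PseudoMetricSpace X]

structure IsQuantizer (σ : X → X) (a s : ℝ) : Prop where
  finite_range : (range σ).Finite
  dist_le : ∀ x, dist x (σ x) ≤ a
  eq_of_dist_le : ∀ x y, dist x y ≤ s → σ x = σ y

/-- Conditions on the values `L` at the representatives of an `(a, s)`-quantizer `σ` under which
`L ∘ σ` is 1-Hölder-`α` and `ε`-close to `f`: points with different representatives are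
`s`-apart, and representatives are `a`-close to the points they represent. -/
structure IsCoarseHolderApprox (α ε a s : ℝ) (f L : X → ℝ) : Prop where
  holder : ∀ u v r, s ≤ r → dist u v ≤ r + 2 * a → |L u - L v| ≤ r ^ α
  close : ∀ u v, dist u v ≤ a → |L v - f u| ≤ ε

theorem IsQuantizer.exists_holder_approx {σ : X → X} {α ε a s : ℝ} (hσ : IsQuantizer σ a s)
    (hs : 0 < s) (hε : 0 ≤ ε) {f : X →ᵇ ℝ} {L : X → ℝ} (hL : IsCoarseHolderApprox α ε a s f L) :
    ∃ g : X →ᵇ ℝ, (∀ x y, |g x - g y| ≤ dist x y ^ α) ∧ dist f g ≤ ε ∧ (range g).Finite := by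
  have hfin : (range (L ∘ σ)).Finite := by
    rw [range_comp]
    exact hσ.finite_range.image L
  have hcont : Continuous (L ∘ σ) :=
    Metric.continuous_iff.2 fun x e he => ⟨s, hs, fun y hy => by
      simpa [hσ.eq_of_dist_le y x hy.le] using he⟩
  obtain ⟨C, hC⟩ := Metric.isBounded_range_iff.1 hfin.isBounded
  refine ⟨.mkOfBound ⟨L ∘ σ, hcont⟩ C hC, fun x y => ?_, ?_, hfin⟩
  · change |L (σ x) - L (σ y)| ≤ _
    by_cases hxy : dist x y ≤ s
    · rw [hσ.eq_of_dist_le x y hxy, sub_self, abs_zero]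
      positivity
    refine hL.holder _ _ _ (le_of_not_ge hxy) ?_
    calc dist (σ x) (σ y) ≤ dist (σ x) x + dist x y + dist y (σ y) := dist_triangle4 _ _ _ _
      _ ≤ dist x y + 2 * a := by linarith [hσ.dist_le x, hσ.dist_le y, dist_comm (σ x) x]
  · refine (BoundedContinuousFunction.dist_le hε).2 fun x => ?_
    rw [Real.dist_eq, abs_sub_comm]
    exact hL.close x (σ x) (hσ.dist_le x)

end Quantization

section InfConvolution

variable {X : Type*} [PseudoMetricSpace X]

def infConv (f : X → ℝ) (ω : ℝ → ℝ) (x : X) : ℝ := ⨅ y, f y + ω (dist x y)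

variable {f : X → ℝ} {ω : ℝ → ℝ} {b : ℝ}

theorem le_infConv (hω : ∀ u, 0 ≤ u → 0 ≤ ω u) (hfb : ∀ x, b ≤ f x) (x : X) :
    b ≤ infConv f ω x :=
  have : Nonempty X := ⟨x⟩
  le_ciInf fun y => by linarith [hfb y, hω _ (dist_nonneg (x := x) (y := y))]

theorem bddBelow_range_add_dist (hω : ∀ u, 0 ≤ u → 0 ≤ ω u) (hfb : ∀ x, b ≤ f x) (x : X) :
    BddBelow (range fun y => f y + ω (dist x y)) :=
  ⟨b, forall_mem_range.2 fun y => by linarith [hfb y, hω _ (dist_nonneg (x := x) (y := y))]⟩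

theorem infConv_le (hω : ∀ u, 0 ≤ u → 0 ≤ ω u) (hω0 : ω 0 = 0) (hfb : ∀ x, b ≤ f x) (x : X) :
    infConv f ω x ≤ f x := by
  simpa [infConv, hω0] using ciInf_le (bddBelow_range_add_dist hω hfb x) x

theorem sub_le_infConv {c : ℝ} {x : X} (h : ∀ y, f x ≤ f y + ω (dist x y) + c) :
    f x - c ≤ infConv f ω x :=
  have : Nonempty X := ⟨x⟩
  le_ciInf fun y => by linarith [h y]

theorem abs_infConv_sub_le (hω : ∀ u, 0 ≤ u → 0 ≤ ω u) (hω_mono : MonotoneOn ω (Ici 0))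
    (hω_add : ∀ u v, 0 ≤ u → 0 ≤ v → ω (u + v) ≤ ω u + ω v) (hfb : ∀ x, b ≤ f x) (x y : X) :
    |infConv f ω x - infConv f ω y| ≤ ω (dist x y) := by
  have key : ∀ x y : X, infConv f ω x ≤ infConv f ω y + ω (dist x y) := by
    intro x y
    have : Nonempty X := ⟨x⟩
    rw [← sub_le_iff_le_add]
    refine le_ciInf fun z => ?_
    have h1 := ciInf_le (bddBelow_range_add_dist hω hfb x) z
    have h2 : ω (dist x z) ≤ ω (dist x y) + ω (dist y z) :=
      (hω_mono dist_nonneg (add_nonneg dist_nonneg dist_nonneg) (dist_triangle x y z)).trans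
        (hω_add _ _ dist_nonneg dist_nonneg)
    simp only [infConv] at h1 ⊢
    linarith
  have := key y x
  rw [dist_comm] at this
  exact abs_sub_le_iff.2 ⟨by linarith [key x y], by linarith⟩

end InfConvolution

section CoarseApprox

variable {X : Type*} [PseudoMetricSpace X] {α ε : ℝ}

/-- Inf-convolution of `f` with `u ↦ min (t u) (u ^ α)`, which is concave, hence subadditive. -/
theorem exists_lipschitz_regularization (hα0 : 0 < α) (hα1 : α ≤ 1) {c : ℝ} (hc : 0 < c)
    (f : X →ᵇ ℝ) (hf : ∀ x y, |f x - f y| ≤ dist x y ^ α) :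
    ∃ t > 0, ∃ M : X → ℝ,
      (∀ x y r a, 0 ≤ r → 0 ≤ a → dist x y ≤ r + a → |M x - M y| ≤ r ^ α + t * a) ∧
      (∀ x, |M x - f x| ≤ c) ∧ ∀ x, |M x| ≤ ‖f‖ := by
  obtain ⟨t, ht, hrpow⟩ := Real.exists_rpow_le_mul_add hα0 hα1 hc
  set ω : ℝ → ℝ := fun u => min (t * u) (u ^ α)
  have hω : ∀ u, 0 ≤ u → 0 ≤ ω u := fun u hu => le_min (by positivity) (by positivity)
  have hω_mono : MonotoneOn ω (Ici 0) := fun u hu v _ huv =>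
    min_le_min (by gcongr) (Real.rpow_le_rpow hu huv hα0.le)
  have hω_concave : ConcaveOn ℝ (Ici 0) ω :=
    ((concaveOn_id (convex_Ici 0)).smul ht.le).inf (Real.concaveOn_rpow hα0.le hα1)
  have hω_add : ∀ u v, 0 ≤ u → 0 ≤ v → ω (u + v) ≤ ω u + ω v := fun u v hu hv =>
    hω_concave.map_add_le (hω 0 le_rfl) hu hv
  have hfb : ∀ x, -‖f‖ ≤ f x := f.neg_norm_le_apply
  have hM_le : ∀ x, infConv f ω x ≤ f x :=
    infConv_le hω (by simp [ω, Real.zero_rpow hα0.ne']) hfb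
  have hM_ge : ∀ x, f x - c ≤ infConv f ω x := fun x => sub_le_infConv fun y => by
    have h1 := (le_abs_self _).trans (hf x y)
    have h2 : dist x y ^ α - c ≤ ω (dist x y) :=
      le_min (by linarith [hrpow (dist x y) dist_nonneg]) (by linarith)
    linarith
  refine ⟨t, ht, infConv f ω, fun x y r a hr ha hd => ?_, fun x => ?_, fun x => ?_⟩
  · calc |infConv f ω x - infConv f ω y| ≤ ω (dist x y) :=
          abs_infConv_sub_le hω hω_mono hω_add hfb x y
      _ ≤ ω (r + a) := hω_mono dist_nonneg (mem_Ici.2 (by linarith)) hd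
      _ ≤ ω r + ω a := hω_add _ _ hr ha
      _ ≤ r ^ α + t * a := add_le_add (min_le_right _ _) (min_le_left _ _)
  · exact abs_le.2 ⟨by linarith [hM_ge x], by linarith [hM_le x]⟩
  · exact abs_le.2 ⟨le_infConv hω hfb x, (hM_le x).trans (f.apply_le_norm x)⟩

/-- The values are a damped Lipschitz regularization `M` of `f`: the error `2 a` in the distance
costs only `2 t a ≤ 2 t η s ^ α`, which the damping absorbs. -/
theorem exists_isCoarseHolderApprox_of_le_one (hα0 : 0 < α) (hα1 : α ≤ 1) (hε : 0 < ε)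
    (f : X →ᵇ ℝ) (hf : ∀ x y, |f x - f y| ≤ dist x y ^ α) :
    ∃ η > 0, ∀ a s, 0 ≤ a → 0 < s → a ≤ η * s ^ α → a ≤ η →
      ∃ L, IsCoarseHolderApprox α ε a s f L := by
  obtain ⟨t, ht, M, hM_holder, hM_close, hM_abs⟩ :=
    exists_lipschitz_regularization hα0 hα1 (half_pos hε) f hf
  obtain ⟨δ, hδ, hδB⟩ := exists_pos_mul_le (by positivity : 0 < ε / 4) ‖f‖
  set η := min (ε / (4 * t)) (δ / (2 * t))
  have hηε : t * η ≤ ε / 4 := by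
    have := min_le_left (ε / (4 * t)) (δ / (2 * t))
    rw [le_div_iff₀ (by positivity)] at this
    linarith
  have hηδ : 2 * t * η ≤ δ := by
    have := min_le_right (ε / (4 * t)) (δ / (2 * t))
    rw [le_div_iff₀ (by positivity)] at this
    linarith
  refine ⟨η, by positivity, fun a s ha hs has haη => ⟨fun x => M x / (1 + δ), ?_, ?_⟩⟩
  · intro u v r hsr hd
    have hsrα : s ^ α ≤ r ^ α := Real.rpow_le_rpow hs.le hsr hα0.le
    have h2ta : t * (2 * a) ≤ δ * r ^ α :=
      calc t * (2 * a) ≤ 2 * t * η * s ^ α := by nlinarith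
        _ ≤ δ * r ^ α := by gcongr
    calc |M u / (1 + δ) - M v / (1 + δ)| = |M u - M v| / (1 + δ) := by
          rw [← sub_div, abs_div, abs_of_pos (by linarith : (0 : ℝ) < 1 + δ)]
      _ ≤ (r ^ α + t * (2 * a)) / (1 + δ) := by
          gcongr
          exact hM_holder u v r (2 * a) (hs.le.trans hsr) (by linarith) hd
      _ ≤ r ^ α := by
          rw [div_le_iff₀ (by linarith)]
          linarith
  · intro u v huv
    have hMvu : |M v - M u| ≤ ε / 4 := by
      have := hM_holder v u 0 a le_rfl ha (by rwa [zero_add, dist_comm])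
      rw [Real.zero_rpow hα0.ne', zero_add] at this
      nlinarith
    calc |M v / (1 + δ) - f u| ≤ |M v / (1 + δ) - M v| + |M v - M u| + |M u - f u| := by
          linarith [abs_sub_le (M v / (1 + δ)) (M v) (f u), abs_sub_le (M v) (M u) (f u)]
      _ ≤ δ * ‖f‖ + ε / 4 + ε / 2 := by
          gcongr
          · exact (abs_div_one_add_sub_le hδ.le _).trans (by gcongr; exact hM_abs v)
          · exact hM_close u
      _ ≤ ε := by linarith

/-- As `s ≤ 1 ≤ α`, `a ≤ η s ≤ η r`: distances are distorted by a factor `1 + 2 η` at most,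
which damping `f` itself absorbs. -/
theorem exists_isCoarseHolderApprox_of_one_le (hα : 1 ≤ α) (hε : 0 < ε) (f : X →ᵇ ℝ)
    (hf : ∀ x y, |f x - f y| ≤ dist x y ^ α) :
    ∃ η > 0, ∀ a s, 0 ≤ a → 0 < s → s ≤ 1 → a ≤ η * s ^ α → a ≤ η →
      ∃ L, IsCoarseHolderApprox α ε a s f L := by
  obtain ⟨δ, hδ, hδB⟩ := exists_pos_mul_le (half_pos hε) ‖f‖
  have hsmall : ∀ᶠ η in 𝓝 (0 : ℝ), (1 + 2 * η) ^ α < 1 + δ ∧ η < 1 ∧ η < ε / 2 := by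
    have hcont : ContinuousAt (fun η : ℝ => (1 + 2 * η) ^ α) 0 :=
      (continuousAt_const.add (continuousAt_const.mul continuousAt_id)).rpow_const
        (Or.inr (by linarith))
    refine (hcont.eventually (gt_mem_nhds ?_)).and
      ((gt_mem_nhds one_pos).and (gt_mem_nhds (half_pos hε)))
    simpa using hδ
  obtain ⟨η, ⟨hη1, hη2, hη3⟩, hη⟩ :=
    ((hsmall.filter_mono nhdsWithin_le_nhds).and (self_mem_nhdsWithin (s := Ioi (0 : ℝ)))).exists
  refine ⟨η, hη, fun a s ha hs hs1 has haη => ⟨fun x => f x / (1 + δ), ?_, ?_⟩⟩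
  · intro u v r hsr hd
    have hdr : dist u v ≤ (1 + 2 * η) * r := by
      have hsα : s ^ α ≤ s := Real.rpow_le_self_of_le_one hs.le hs1 hα
      nlinarith
    have hr : 0 ≤ r := hs.le.trans hsr
    calc |f u / (1 + δ) - f v / (1 + δ)| = |f u - f v| / (1 + δ) := by
          rw [← sub_div, abs_div, abs_of_pos (by linarith : (0 : ℝ) < 1 + δ)]
      _ ≤ ((1 + 2 * η) * r) ^ α / (1 + δ) := by
          gcongr
          exact (hf u v).trans (Real.rpow_le_rpow dist_nonneg hdr (by linarith))
      _ ≤ r ^ α := by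
          rw [Real.mul_rpow (by linarith) hr, div_le_iff₀ (by linarith)]
          nlinarith [Real.rpow_nonneg hr α]
  · intro u v huv
    have hfvu : |f v - f u| ≤ a :=
      calc |f v - f u| ≤ dist v u ^ α := hf v u
        _ ≤ a ^ α := Real.rpow_le_rpow dist_nonneg (by rwa [dist_comm]) (by linarith)
        _ ≤ a := Real.rpow_le_self_of_le_one ha (by linarith) hα
    calc |f v / (1 + δ) - f u| ≤ |f v / (1 + δ) - f v| + |f v - f u| := abs_sub_le _ _ _
      _ ≤ δ * ‖f‖ + a := by
          gcongr
          exact (abs_div_one_add_sub_le hδ.le _).trans (by gcongr; exact f.norm_coe_le_norm v)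
      _ ≤ ε := by linarith

theorem exists_isCoarseHolderApprox (hα : 0 < α) (hε : 0 < ε) (f : X →ᵇ ℝ)
    (hf : ∀ x y, |f x - f y| ≤ dist x y ^ α) :
    ∃ η > 0, ∀ a s, 0 ≤ a → 0 < s → s ≤ 1 → a ≤ η * s ^ α → a ≤ η →
      ∃ L, IsCoarseHolderApprox α ε a s f L := by
  rcases le_total α 1 with hα1 | hα1
  · obtain ⟨η, hη, H⟩ := exists_isCoarseHolderApprox_of_le_one hα hα1 hε f hf
    exact ⟨η, hη, fun a s ha hs _ => H a s ha hs⟩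
  · exact exists_isCoarseHolderApprox_of_one_le hα1 hε f hf

end CoarseApprox

section SeparatedStructure

variable {p : ℕ} {F : Set (EuclideanSpace ℝ (Fin p))} {ν ρ α : ℝ}

theorem SepStructure.exists_isQuantizer (h : SepStructure ν ρ F) :
    ∃ K > 0, ∀ k : ℕ, ∃ σ : F → F, IsQuantizer σ (K * ν ^ k) (1 / K * ρ ^ k) := by
  obtain ⟨K, hK, hS⟩ := h
  refine ⟨K, hK, fun k => ?_⟩
  obtain ⟨S, hcov, hdiam, hsep⟩ := hS k
  have hmem : ∀ x : F, ∃ A : S, (x : EuclideanSpace ℝ (Fin p)) ∈ (A : Set _) := fun x => by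
    simpa using hcov x.2
  choose P hP using hmem
  -- representatives of the pieces are chosen through the quotient, so no default point is needed
  let σ : F → F := fun x => (Quotient.mk (Setoid.ker P) x).out
  have hPσ : ∀ x, P (σ x) = P x := fun x => Quotient.mk_out (s := Setoid.ker P) x
  have : Finite (Quotient (Setoid.ker P)) := Finite.of_injective _ (Setoid.kerLift_injective P)
  refine ⟨σ, ⟨(finite_range _).subset (range_comp_subset_range _ _), fun x => ?_,
    fun x y hxy => ?_⟩⟩
  · have hσx := hP (σ x)
    rw [hPσ] at hσx
    exact (edist_lt_ofReal.1 ((Metric.edist_le_ediam_of_mem (hP x) hσx).trans_lt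
      (hdiam _ (P x).2))).le
  · by_contra hne
    have hPne : P x ≠ P y := fun hPxy => hne (congrArg Quotient.out (Quotient.sound hPxy))
    have hlt := (hsep _ (P x).2 _ (P y).2 (Subtype.coe_ne_coe.2 hPne)).trans_le
      ((iInf₂_le _ (hP x)).trans (Metric.infEDist_le_edist_of_mem (hP y)))
    rw [edist_dist, ENNReal.ofReal_lt_ofReal_iff'] at hlt
    exact hlt.1.not_ge hxy

theorem SepStructure.exists_mem_holderBall_finite_range (hsep : SepStructure ν ρ F)
    (hν0 : 0 < ν) (hν1 : ν < 1) (hρ0 : 0 < ρ) (hρ1 : ρ < 1) (hα0 : 0 < α)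
    (hα1 : α < Real.log ν / Real.log ρ) {f : F →ᵇ ℝ} (hf : f ∈ HolderBall α F) {ε : ℝ}
    (hε : 0 < ε) : ∃ g ∈ HolderBall α F, dist f g ≤ ε ∧ (range g).Finite := by
  obtain ⟨K, hK, hσ⟩ := hsep.exists_isQuantizer
  obtain ⟨η, hη, hL⟩ := exists_isCoarseHolderApprox hα0 hε f hf
  have hscale : (fun k : ℕ => (1 / K * ρ ^ k) ^ α) = fun k => (1 / K) ^ α * (ρ ^ α) ^ k :=
    funext fun k => by rw [Real.mul_rpow (by positivity) (by positivity), Real.rpow_pow_comm hρ0.le]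
  have hlittle : (fun k : ℕ => K * ν ^ k) =o[atTop] fun k => (1 / K * ρ ^ k) ^ α := by
    rw [hscale]
    exact ((isLittleO_pow_pow_of_lt_left hν0.le
      (Real.lt_rpow_of_lt_log_div_log hν0 hρ0 hρ1 hα1)).const_mul_left K).const_mul_right
      (by positivity)
  have hν_lim := (tendsto_pow_atTop_nhds_zero_of_lt_one hν0.le hν1).const_mul K
  have hρ_lim := (tendsto_pow_atTop_nhds_zero_of_lt_one hρ0.le hρ1).const_mul (1 / K)
  rw [mul_zero] at hν_lim hρ_lim
  obtain ⟨k, hk1, hk2, hk3⟩ := ((hρ_lim.eventually (eventually_le_nhds one_pos)).and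
    ((hlittle.def hη).and (hν_lim.eventually (eventually_le_nhds hη)))).exists
  rw [Real.norm_of_nonneg (by positivity), Real.norm_of_nonneg (by positivity)] at hk2
  obtain ⟨σ, hσk⟩ := hσ k
  obtain ⟨L, hL⟩ := hL _ _ (by positivity) (by positivity) hk1 hk2 hk3
  exact hσk.exists_holder_approx (by positivity) hε.le hL

end SeparatedStructure

section NullRange

variable {X : Type*} [TopologicalSpace X] [CompactSpace X]

/-- A small perturbation of `g` has range in a thin neighbourhood of the compact set `range g`. -/
theorem isOpen_setOf_volume_range_lt (c : ℝ≥0∞) :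
    IsOpen {g : X →ᵇ ℝ | volume (range g) < c} := by
  refine Metric.isOpen_iff.2 fun g hg => ?_
  obtain ⟨U, hgU, hU, hUc⟩ := Set.exists_isOpen_lt_of_lt _ _ hg
  obtain ⟨η, hη, hηU⟩ := (isCompact_range g.continuous).exists_thickening_subset_open hU hgU
  refine ⟨η, hη, fun h hh => (measure_mono (?_ : range h ⊆ U)).trans_lt hUc⟩
  rintro _ ⟨x, rfl⟩
  exact hηU (Metric.mem_thickening_iff.2
    ⟨g x, mem_range_self x, (BoundedContinuousFunction.dist_coe_le_dist x).trans_lt hh⟩)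

theorem isGδ_setOf_volume_range_eq_zero : IsGδ {g : X →ᵇ ℝ | volume (range g) = 0} := by
  have : {g : X →ᵇ ℝ | volume (range g) = 0} =
      ⋂ n : ℕ, {g : X →ᵇ ℝ | volume (range g) < (n : ℝ≥0∞)⁻¹} := by
    ext g
    simp only [mem_ofPred_eq, mem_iInter]
    refine ⟨fun h n => by simp [h], fun h => of_not_not fun hne => ?_⟩
    obtain ⟨n, hn⟩ := ENNReal.exists_inv_nat_lt hne
    exact (h n).not_gt hn
  rw [this]
  exact IsGδ.iInter_of_isOpen fun n => isOpen_setOf_volume_range_lt _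

end NullRange

section Dimension

variable {p : ℕ} {F : Set (EuclideanSpace ℝ (Fin p))}

theorem dstarF_nonneg (f : F → ℝ) : 0 ≤ DstarF F f :=
  Real.sSup_nonneg' ⟨0, by simp, le_rfl⟩

theorem dstarF_eq_zero_of_volume_range {f : F → ℝ} (hf : volume (range f) = 0) :
    DstarF F f = 0 := by
  refine le_antisymm (Real.sSup_nonpos fun d hd => not_lt.1 fun hd0 => ?_) (dstarF_nonneg f)
  -- a level set of positive dimension is nonempty, so its level lies in the null set `range f`
  have hsub : {r : ℝ | ENNReal.ofReal d ≤ dimH (Subtype.val '' (f ⁻¹' {r}))} ⊆ range f := by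
    intro r hr
    by_contra hrf
    rw [mem_ofPred_eq, preimage_singleton_eq_empty.2 hrf, image_empty, dimH_empty,
      nonpos_iff_eq_zero, ENNReal.ofReal_eq_zero] at hr
    exact hr.not_gt hd0
  exact (measure_mono_null hsub hf ▸ hd : (0 : ℝ≥0∞) < 0).false

end Dimension

theorem isClosed_holderBall (α : ℝ) {p : ℕ} (F : Set (EuclideanSpace ℝ (Fin p))) :
    IsClosed (HolderBall α F) := by
  simp only [HolderBall, ofPred_forall]
  exact isClosed_iInter fun x => isClosed_iInter fun y =>
    isClosed_le (by fun_prop) continuous_const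

theorem zero_mem_holderBall (α : ℝ) {p : ℕ} (F : Set (EuclideanSpace ℝ (Fin p))) :
    (0 : F →ᵇ ℝ) ∈ HolderBall α F := fun x y => by
  simpa using Real.rpow_nonneg dist_nonneg α

theorem dStar_eq_zero {α : ℝ} {p : ℕ} {F : Set (EuclideanSpace ℝ (Fin p))}
    [BaireSpace (HolderBall α F)] {G : Set (HolderBall α F)} (hG : Dense G) (hGδ : IsGδ G)
    (hzero : ∀ g ∈ G, DstarF F (g : F →ᵇ ℝ) = 0) : DStar α F = 0 := by
  have : Nonempty (HolderBall α F) := ⟨⟨0, zero_mem_holderBall α F⟩⟩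
  have hS : ∀ d ∈ {d : ℝ | ∃ G' : Set (HolderBall α F), Dense G' ∧ IsGδ G' ∧
      d = sInf ((fun g : HolderBall α F => DstarF F (g : F →ᵇ ℝ)) '' G')}, d = 0 := by
    rintro _ ⟨G', hG', hG'δ, rfl⟩
    obtain ⟨g, hgG, hgG'⟩ := (hG.inter_of_Gδ hGδ hG'δ hG').nonempty
    refine le_antisymm (csInf_le ⟨0, ?_⟩ ⟨g, hgG', hzero g hgG⟩) (Real.sInf_nonneg ?_) <;>
      exact forall_mem_image.2 fun g _ => dstarF_nonneg _
  exact le_antisymm (Real.sSup_nonpos fun d hd => (hS d hd).le)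
    (Real.sSup_nonneg fun d hd => (hS d hd).ge)

theorem stmt10_general {p : ℕ} (F : Set (EuclideanSpace ℝ (Fin p)))
    (hFc : IsCompact F)
    (ν ρ : ℝ) (hν0 : 0 < ν) (hν1 : ν < 1) (hρ0 : 0 < ρ) (hρ1 : ρ < 1)
    (hsep : SepStructure ν ρ F)
    (α : ℝ) (hα0 : 0 < α) (hα1 : α < Real.log ν / Real.log ρ) :
    (∃ G : Set ↥(HolderBall α F), Dense G ∧ IsGδ G ∧
      ∀ f ∈ G, volume (Set.range ⇑((f : ↥(HolderBall α F)) : BoundedContinuousFunction ↥F ℝ)) = 0) ∧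
    DStar α F = 0 := by
  have : CompactSpace F := isCompact_iff_compactSpace.mp hFc
  have : CompleteSpace (HolderBall α F) := (isClosed_holderBall α F).completeSpace_coe
  set G : Set (HolderBall α F) := {g | volume (range ((g : HolderBall α F) : F →ᵇ ℝ)) = 0}
  have hGδ : IsGδ G := isGδ_setOf_volume_range_eq_zero.preimage continuous_subtype_val
  have hG : Dense G := Metric.dense_iff.2 fun f r hr => by
    obtain ⟨g, hg, hfg, hfin⟩ :=
      hsep.exists_mem_holderBall_finite_range hν0 hν1 hρ0 hρ1 hα0 hα1 f.2 (half_pos hr)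
    exact ⟨⟨g, hg⟩, Metric.mem_ball'.2 (hfg.trans_lt (half_lt_self hr)), hfin.measure_zero _⟩
  exact ⟨⟨G, hG, hGδ, fun _ hg => hg⟩,
    dStar_eq_zero hG hGδ fun _ hg => dstarF_eq_zero_of_volume_range hg⟩

/-- If `F` is nonempty compact with a `(ν, ρ)` separated
structure and `0 < α < log ν / log ρ`, then there is a dense Gδ subset `𝒢` of
`C₁^α(F)` on which `λ(f(F)) = 0`, and consequently `D_*(α, F) = 0`. -/
theorem stmt10 {p : ℕ} (F : Set (EuclideanSpace ℝ (Fin p)))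
    (hFne : F.Nonempty) (hFc : IsCompact F)
    (ν ρ : ℝ) (hν0 : 0 < ν) (hν1 : ν < 1) (hρ0 : 0 < ρ) (hρ1 : ρ < 1)
    (hsep : SepStructure ν ρ F)
    (α : ℝ) (hα0 : 0 < α) (hα1 : α < Real.log ν / Real.log ρ) :
    (∃ G : Set ↥(HolderBall α F), Dense G ∧ IsGδ G ∧
      ∀ f ∈ G, volume (Set.range ⇑((f : ↥(HolderBall α F)) : BoundedContinuousFunction ↥F ℝ)) = 0) ∧
    DStar α F = 0 :=
  stmt10_general F hFc ν ρ hν0 hν1 hρ0 hρ1 hsep α hα0 hα1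

end
end
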